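/- arXiv:2007.05958 — 11 statements merged into one kernel-verified Lean document; each statement's English description precedes it below -/
import Mathlib

section
/- For every integer k ≥ 0 and every finite sequence α₀,…,α_k of non-negative integers, the rational pair X̂_k satisfies X̂_k = φ₁^{α₀}φ₀ ⋯ φ₁^{α_k}φ₀(1,0). -/
noncomputable def phi0 (p : ℝ × ℝ) : ℝ × ℝ := (1 / (1 + p.2), p.1 / (1 + p.2))
noncomputable def phi1 (p : ℝ × ℝ) : ℝ × ℝ := (p.1 / (1 + p.2), p.2 / (1 + p.2))

/-- The composition φ₁^{α₀} φ₀ ⋯ φ₁^{α_k} φ₀. -/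
noncomputable def compPhi (a : ℕ → ℕ) : ℕ → (ℝ × ℝ → ℝ × ℝ)
  | 0 => phi1^[a 0] ∘ phi0
  | k + 1 => compPhi a k ∘ (phi1^[a (k + 1)] ∘ phi0)

/-- The vectors X_{-3}, X_{-2}, X_{-1}, X_0, X_1, … (indices shifted by 3),
with coordinates written as (q, p, r):
`Xv a n = X_{n-3}` and `X_k = X_{k-3} + X_{k-1} + α_k X_{k-2}` for `k ≥ 0`. -/
def Xv (a : ℕ → ℕ) : ℕ → ℤ × ℤ × ℤ
  | 0 => (0, 0, 1)
  | 1 => (1, 0, 0)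
  | 2 => (1, 1, 0)
  | n + 3 => Xv a n + Xv a (n + 2) + (a n : ℤ) • Xv a (n + 1)

/-- The rational pair X̂ = (p/q, r/q) corresponding to the vector X = (q,p,r). -/
noncomputable def Xhat (v : ℤ × ℤ × ℤ) : ℝ × ℝ :=
  ((v.2.1 : ℝ) / (v.1 : ℝ), (v.2.2 : ℝ) / (v.1 : ℝ))

/-- Integer lift of `phi1^[α] ∘ phi0`. -/
def Mstep (α : ℕ) (v : ℤ × ℤ × ℤ) : ℤ × ℤ × ℤ :=
  (v.1 + v.2.2 + (α : ℤ) * v.2.1, v.1, v.2.1)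

lemma hat_phi1 (v : ℤ × ℤ × ℤ) (hq : 0 < v.1) (hr : 0 ≤ v.2.2) :
    phi1 (Xhat v) = Xhat (v.1 + v.2.2, v.2.1, v.2.2) := by
  obtain ⟨q, p, r⟩ := v
  simp only at hq hr
  have hq' : (q : ℝ) ≠ 0 := by exact_mod_cast hq.ne'
  have hqr : (q : ℝ) + r ≠ 0 := by
    have : (0:ℤ) < q + r := by omega
    exact_mod_cast this.ne'
  simp only [phi1, Xhat, Int.cast_add, Prod.mk.injEq]
  constructor <;> field_simp <;> ring

lemma hat_phi1_iter (α : ℕ) (v : ℤ × ℤ × ℤ) (hq : 0 < v.1) (hr : 0 ≤ v.2.2) :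
    phi1^[α] (Xhat v) = Xhat (v.1 + (α : ℤ) * v.2.2, v.2.1, v.2.2) := by
  induction α generalizing v with
  | zero => simp
  | succ n ih =>
    rw [Function.iterate_succ_apply, hat_phi1 v hq hr,
      ih (v.1 + v.2.2, v.2.1, v.2.2) (by simp; omega) (by simpa using hr)]
    simp only [Xhat]
    push_cast
    ring_nf

lemma hat_phi0 (v : ℤ × ℤ × ℤ) (hq : 0 < v.1) (hr : 0 ≤ v.2.2) :
    phi0 (Xhat v) = Xhat (v.1 + v.2.2, v.1, v.2.1) := by
  obtain ⟨q, p, r⟩ := v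
  simp only at hq hr
  have hq' : (q : ℝ) ≠ 0 := by exact_mod_cast hq.ne'
  have hqr : (q : ℝ) + r ≠ 0 := by
    have : (0:ℤ) < q + r := by omega
    exact_mod_cast this.ne'
  simp only [phi0, Xhat, Int.cast_add, Prod.mk.injEq]
  constructor <;> field_simp <;> ring

lemma hat_step (α : ℕ) (v : ℤ × ℤ × ℤ) (hq : 0 < v.1) (hp : 0 ≤ v.2.1) (hr : 0 ≤ v.2.2) :
    (phi1^[α] ∘ phi0) (Xhat v) = Xhat (Mstep α v) := by
  rw [Function.comp_apply, hat_phi0 v hq hr,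
    hat_phi1_iter α (v.1 + v.2.2, v.1, v.2.1) (by simp; omega) (by simpa using hp)]
  simp [Mstep]

lemma Mstep_linear (α : ℕ) (u v w : ℤ × ℤ × ℤ) (c : ℤ) :
    Mstep α (u + v + c • w) = Mstep α u + Mstep α v + c • Mstep α w := by
  obtain ⟨q1, p1, r1⟩ := u; obtain ⟨q2, p2, r2⟩ := v; obtain ⟨q3, p3, r3⟩ := w
  simp [Mstep, Prod.ext_iff, Prod.smul_def, smul_eq_mul]
  ring

/-- Shift lemma. -/
lemma Xv_shift (a : ℕ → ℕ) : ∀ n, Xv a (n + 3) = Mstep (a 0) (Xv (fun i => a (i + 1)) (n + 2)) := by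
  intro n
  induction n using Nat.strong_induction_on with
  | _ n ih =>
    match n with
    | 0 =>
      simp [Xv, Mstep, Prod.ext_iff, Prod.smul_def, smul_eq_mul]
    | 1 =>
      simp [Xv, Mstep, Prod.ext_iff, Prod.smul_def, smul_eq_mul]
      ring
    | 2 =>
      simp [Xv, Mstep, Prod.ext_iff, Prod.smul_def, smul_eq_mul]
      ring
    | (m + 3) =>
      have h0 := ih m (by omega)
      have h1 := ih (m + 1) (by omega)
      have h2 := ih (m + 2) (by omega)
      show Xv a (m + 3 + 3) = _
      rw [show m + 3 + 3 = (m + 3) + 3 from rfl, Xv]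
      rw [h0, h1, h2]
      rw [show m + 3 + 2 = (m + 2) + 3 from rfl, Xv]
      rw [← Mstep_linear]
      rfl

lemma Xv_nonneg (a : ℕ → ℕ) : ∀ n, 0 ≤ (Xv a n).1 ∧ 0 ≤ (Xv a n).2.1 ∧ 0 ≤ (Xv a n).2.2 := by
  intro n
  induction n using Nat.strong_induction_on with
  | _ n ih =>
    match n with
    | 0 => simp [Xv]
    | 1 => simp [Xv]
    | 2 => simp [Xv]
    | (m + 3) =>
      have h0 := ih m (by omega)
      have h1 := ih (m + 1) (by omega)
      have h2 := ih (m + 2) (by omega)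
      have hc : (0:ℤ) ≤ (a m : ℤ) := Int.ofNat_nonneg _
      rw [Xv]
      refine ⟨?_, ?_, ?_⟩ <;>
        simp only [Prod.fst_add, Prod.snd_add, Prod.smul_fst, Prod.smul_snd, smul_eq_mul] <;>
        nlinarith [h0.1, h0.2.1, h0.2.2, h1.1, h1.2.1, h1.2.2, h2.1, h2.2.1, h2.2.2]

lemma Xv_q_pos (a : ℕ → ℕ) : ∀ n, 0 < (Xv a (n + 2)).1 := by
  intro n
  induction n using Nat.strong_induction_on with
  | _ n ih =>
    match n with
    | 0 => simp [Xv]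
    | (m + 1) =>
      have h1 := ih m (by omega)
      have h2 := (Xv_nonneg a m).1
      have h3 := (Xv_nonneg a (m + 1)).1
      have hc : (0:ℤ) ≤ (a m : ℤ) := Int.ofNat_nonneg _
      show 0 < (Xv a (m + 3)).1
      rw [Xv]
      simp only [Prod.fst_add, Prod.smul_fst, smul_eq_mul]
      nlinarith

lemma compPhi_succ (a : ℕ → ℕ) (k : ℕ) :
    compPhi a (k + 1) = (phi1^[a 0] ∘ phi0) ∘ compPhi (fun i => a (i + 1)) k := by
  induction k generalizing a with
  | zero => rfl
  | succ k ih =>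
    show compPhi a (k + 1) ∘ (phi1^[a (k + 2)] ∘ phi0) = _
    rw [ih a]
    rfl

/-- X̂_k = φ₁^{α₀}φ₀ ⋯ φ₁^{α_k}φ₀ (1,0). -/
theorem Xhat_eq_compPhi (a : ℕ → ℕ) (k : ℕ) :
    Xhat (Xv a (k + 3)) = compPhi a k (1, 0) := by
  induction k generalizing a with
  | zero =>
    rw [Xv_shift a 0]
    have h10 : ((1:ℝ), (0:ℝ)) = Xhat ((1:ℤ), (1:ℤ), (0:ℤ)) := by
      simp [Xhat]
    have : Xv (fun i => a (i + 1)) 2 = (1, 1, 0) := rfl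
    rw [this]
    rw [show compPhi a 0 (1, 0) = (phi1^[a 0] ∘ phi0) (1, 0) from rfl, h10,
      hat_step (a 0) (1, 1, 0) (by norm_num) (by norm_num) (by norm_num)]
  | succ k ih =>
    rw [Xv_shift a (k + 1)]
    have hq := Xv_q_pos (fun i => a (i + 1)) (k + 1)
    have hn := Xv_nonneg (fun i => a (i + 1)) (k + 3)
    rw [show k + 1 + 2 = k + 3 from rfl] at hq
    rw [← hat_step (a 0) _ hq hn.2.1 hn.2.2, ih (fun i => a (i + 1)), compPhi_succ]
    rfl
end

section
/- Let (α_k)_{k≥0} be a sequence of non-negative integers and let (X_k)_{k≥−3} be the associated vectors with denominators q_k. For every k ≥ 0 such that d(X̂_{k−1}, X̂_k ⊕ X̂_{k−2}) > 0, one has d(X̂_{k−1}, X̂_{k+1}) / d(X̂_{k−1}, X̂_k ⊕ X̂_{k−2}) = (q_{k−2} + q_k)/q_{k+1}; consequently, setting λ_k := (q_{k−2}+q_k)/q_{k+1}, it holds that 1 − λ_k = α_{k+1} · q_{k−1}/q_{k+1}. -/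
/-- Euclidean distance on ℝ². -/
noncomputable def eucDist (a b : ℝ × ℝ) : ℝ :=
  Real.sqrt ((a.1 - b.1) ^ 2 + (a.2 - b.2) ^ 2)

/-! The point `X̂_{k+1}` lies on the segment from `X̂_{k-1}` to the mediant `X̂_k ⊕ X̂_{k-2}`:
since `X_{k+1} = (X_k + X_{k-2}) + α_{k+1} X_{k-1}`, it is the barycentre of the two with weights
`q_k + q_{k-2}` and `α_{k+1} q_{k-1}`. Hence `X̂_{k-1} - X̂_{k+1}` is `(q_{k-2} + q_k) / q_{k+1}`
times `X̂_{k-1} - (X̂_k ⊕ X̂_{k-2})`, which gives both the distance ratio and `1 - λ_k`. -/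

lemma eucDist_eq_abs_mul {x y z : ℝ × ℝ} {t : ℝ} (h : x - z = t • (x - y)) :
    eucDist x z = |t| * eucDist x y := by
  have h₁ : x.1 - z.1 = t * (x.1 - y.1) := congrArg Prod.fst h
  have h₂ : x.2 - z.2 = t * (x.2 - y.2) := congrArg Prod.snd h
  rw [eucDist, eucDist, h₁, h₂, ← Real.sqrt_sq_eq_abs, ← Real.sqrt_mul (sq_nonneg t)]
  ring_nf

lemma div_sub_div_add_mul_eq {K : Type*} [Field K] {q Q : K} (p P n : K) (hq : q ≠ 0)
    (hQ : Q ≠ 0) (h : Q + n * q ≠ 0) :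
    p / q - (P + n * p) / (Q + n * q) = Q / (Q + n * q) * (p / q - P / Q) := by
  rw [div_sub_div _ _ hq h, div_sub_div _ _ hq hQ, div_mul_div_comm]
  field_simp
  ring

lemma Xhat_sub_Xhat_add_smul (u v : ℤ × ℤ × ℤ) (n : ℤ) (hu : u.1 ≠ 0) (hv : v.1 ≠ 0)
    (huv : (u + n • v).1 ≠ 0) :
    Xhat v - Xhat (u + n • v) = ((u.1 : ℝ) / (u + n • v).1) • (Xhat v - Xhat u) := by
  simp only [Prod.fst_add, Prod.smul_fst, smul_eq_mul] at huv ⊢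
  have huv' : (u.1 : ℝ) + n * v.1 ≠ 0 := by exact_mod_cast huv
  simp only [Xhat, Prod.ext_iff, Prod.fst_sub, Prod.snd_sub, Prod.smul_fst, Prod.smul_snd,
    Prod.fst_add, Prod.snd_add, smul_eq_mul]
  push_cast
  exact ⟨div_sub_div_add_mul_eq _ _ _ (by exact_mod_cast hv) (by exact_mod_cast hu) huv',
    div_sub_div_add_mul_eq _ _ _ (by exact_mod_cast hv) (by exact_mod_cast hu) huv'⟩

section

variable (a : ℕ → ℕ)

lemma Xv_add_three (n : ℕ) :
    Xv a (n + 3) = Xv a n + Xv a (n + 2) + (a n : ℤ) • Xv a (n + 1) := by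
  rw [Xv]

lemma Xv_fst_nonneg : ∀ n, 0 ≤ (Xv a n).1
  | 0 | 1 | 2 => by simp [Xv]
  | n + 3 => by
    have := Xv_fst_nonneg n
    have := Xv_fst_nonneg (n + 1)
    have := Xv_fst_nonneg (n + 2)
    simp only [Xv_add_three, Prod.fst_add, Prod.smul_fst, smul_eq_mul]
    positivity

lemma Xv_fst_pos : ∀ n, 0 < (Xv a (n + 1)).1
  | 0 | 1 => by simp [Xv]
  | n + 2 => by
    have := Xv_fst_nonneg a n
    have := Xv_fst_nonneg a (n + 1)
    have := Xv_fst_pos (n + 1)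
    simp only [Xv_add_three, Prod.fst_add, Prod.smul_fst, smul_eq_mul]
    nlinarith

end

/-- for every k ≥ 0 with d(X̂_{k-1}, X̂_k ⊕ X̂_{k-2}) > 0,
d(X̂_{k-1}, X̂_{k+1}) / d(X̂_{k-1}, X̂_k ⊕ X̂_{k-2}) = (q_{k-2}+q_k)/q_{k+1} = λ_k, and
1 - λ_k = α_{k+1} q_{k-1}/q_{k+1}.  (Recall `Xv a (k+3) = X_k`, so `X_{k-1} = Xv a (k+2)`,
`X_{k-2} = Xv a (k+1)`, `X_{k+1} = Xv a (k+4)`, and the mediant X̂ ⊕ Ŷ corresponds to the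
sum of the vectors.) -/
theorem lambda_formula (a : ℕ → ℕ) (k : ℕ)
    (h : 0 < eucDist (Xhat (Xv a (k + 2))) (Xhat (Xv a (k + 3) + Xv a (k + 1)))) :
    eucDist (Xhat (Xv a (k + 2))) (Xhat (Xv a (k + 4))) /
        eucDist (Xhat (Xv a (k + 2))) (Xhat (Xv a (k + 3) + Xv a (k + 1)))
      = (((Xv a (k + 1)).1 + (Xv a (k + 3)).1 : ℤ) : ℝ) / ((Xv a (k + 4)).1 : ℝ) ∧
    1 - (((Xv a (k + 1)).1 + (Xv a (k + 3)).1 : ℤ) : ℝ) / ((Xv a (k + 4)).1 : ℝ)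
      = (a (k + 1) : ℝ) * ((Xv a (k + 2)).1 : ℝ) / ((Xv a (k + 4)).1 : ℝ) := by
  set u := Xv a (k + 3) + Xv a (k + 1)
  have hrec : Xv a (k + 4) = u + (a (k + 1) : ℤ) • Xv a (k + 2) := by
    rw [show k + 4 = (k + 1) + 3 from rfl, Xv_add_three, add_comm (Xv a (k + 1))]
  have hu : u.1 = (Xv a (k + 1)).1 + (Xv a (k + 3)).1 := add_comm _ _
  have hu_pos : 0 < u.1 := by
    rw [hu]; linarith [Xv_fst_nonneg a (k + 1), Xv_fst_pos a (k + 2)]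
  have hq_pos : (0 : ℝ) < (Xv a (k + 4)).1 := by exact_mod_cast Xv_fst_pos a (k + 3)
  have hdist := eucDist_eq_abs_mul <| Xhat_sub_Xhat_add_smul u (Xv a (k + 2)) (a (k + 1))
    hu_pos.ne' (Xv_fst_pos a (k + 1)).ne' (hrec ▸ Xv_fst_pos a (k + 3)).ne'
  rw [← hrec, abs_of_nonneg (div_nonneg (by exact_mod_cast hu_pos.le) hq_pos.le)] at hdist
  refine ⟨by rw [hdist, mul_div_cancel_right₀ _ h.ne', hu], ?_⟩
  rw [eq_div_iff hq_pos.ne', sub_mul, div_mul_cancel₀ _ hq_pos.ne', hrec]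
  simp only [Prod.fst_add, Prod.smul_fst, smul_eq_mul, hu]
  push_cast
  ring
end

section
/- Let (α_k)_{k≥0} be a sequence of non-negative integers with associated vectors X_k and denominators q_k. Assume that X̂_{2k} → 𝔭 and X̂_{2k+1} → 𝔮 as k → ∞ with 𝔭 ≠ 𝔮, that d(X̂_{k−2} ⊕ X̂_k, X̂_k) → 0, and that q_k/q_{k−1} → +∞. Then for every (x,y) ∈ △̄ ∖ {(0,0)}: φ₁^{α₀}φ₀ ⋯ φ₁^{α_{2k}}φ₀(x,y) → 𝔭 and φ₁^{α₀}φ₀ ⋯ φ₁^{α_{2k+1}}φ₀(x,y) → 𝔮 as k → ∞; moreover φ₁^{α₀}φ₀ ⋯ φ₁^{α_{2k}}φ₀(0,0) → 𝔮 and φ₁^{α₀}φ₀ ⋯ φ₁^{α_{2k+1}}φ₀(0,0) → 𝔭. -/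
open Filter Topology

/-- The open triangle △ = {(x,y) : 1 ≥ x ≥ y > 0}. -/
def tri : Set (ℝ × ℝ) := {p | 1 ≥ p.1 ∧ p.1 ≥ p.2 ∧ p.2 > 0}

/-!
In homogeneous coordinates `(q, p, r) ↦ (p / q, r / q)` both `φ₀` and `φ₁` act linearly on the
closed positive quadrant, and by the recursion for `X_k` the composition
`φ₁^{α₀}φ₀ ⋯ φ₁^{α_k}φ₀` sends `(x, y)` to the point of `(1 - x) X_{k-1} + x X_k + y X_{k-2}`.
All `X_k` lie in the cone `‖(p, r)‖_∞ ≤ q` and `q_k` is nondecreasing, so for `x > 0` the growth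
`q_k / q_{k-1} → ∞` makes the terms in `X_{k-1}` and `X_{k-2}` negligible and the image tends to
the limit of `X̂_k`. At `(0, 0)` the image is exactly `X̂_{k-1}`, whose limit is the other one.
-/

noncomputable section

def dehomogenize (v : ℝ × ℝ × ℝ) : ℝ × ℝ := (v.2.1 / v.1, v.2.2 / v.1)

theorem dehomogenize_smul {c : ℝ} (hc : c ≠ 0) (v : ℝ × ℝ × ℝ) :
    dehomogenize (c • v) = dehomogenize v := by
  simp only [dehomogenize, Prod.smul_fst, Prod.smul_snd, smul_eq_mul, mul_div_mul_left _ _ hc]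

theorem dehomogenize_one_mk (p : ℝ × ℝ) : dehomogenize (1, p) = p := by
  simp [dehomogenize]

theorem continuousAt_dehomogenize {v : ℝ × ℝ × ℝ} (hv : v.1 ≠ 0) :
    ContinuousAt dehomogenize v := by
  unfold dehomogenize
  fun_prop (disch := exact hv)

theorem tendsto_dehomogenize_smul_add {w e : ℕ → ℝ × ℝ × ℝ} {L : ℝ × ℝ} {c : ℝ}
    (hc : c ≠ 0) (hw : ∀ n, (w n).1 ≠ 0)
    (hL : Tendsto (fun n => dehomogenize (w n)) atTop (𝓝 L))
    (he : Tendsto (fun n => (w n).1⁻¹ • e n) atTop (𝓝 0)) :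
    Tendsto (fun n => dehomogenize (c • w n + e n)) atTop (𝓝 L) := by
  have hnormalize : ∀ n, (w n).1⁻¹ • w n = (1, dehomogenize (w n)) := fun n => by
    simp [dehomogenize, Prod.ext_iff, inv_mul_cancel₀ (hw n), div_eq_inv_mul]
  have hrescale : ∀ n, dehomogenize (c • w n + e n)
      = dehomogenize ((1, dehomogenize (w n)) + c⁻¹ • ((w n).1⁻¹ • e n)) := fun n => by
    rw [← hnormalize, ← dehomogenize_smul (mul_ne_zero (inv_ne_zero hc) (inv_ne_zero (hw n))),
      smul_add, smul_smul, smul_smul, mul_right_comm, inv_mul_cancel₀ hc, one_mul]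
  have hlim : Tendsto (fun n => ((1 : ℝ), dehomogenize (w n)) + c⁻¹ • ((w n).1⁻¹ • e n))
      atTop (𝓝 (1, L)) := by
    simpa using (tendsto_const_nhds.prodMk_nhds hL).add (he.const_smul c⁻¹)
  have := (continuousAt_dehomogenize (v := (1, L)) one_ne_zero).tendsto.comp hlim
  rw [dehomogenize_one_mk] at this
  exact this.congr fun n => (hrescale n).symm

theorem phi0_dehomogenize {q p r : ℝ} (hq : 0 < q) (hr : 0 ≤ r) :
    phi0 (dehomogenize (q, p, r)) = dehomogenize (q + r, q, p) := by
  have : q + r ≠ 0 := by positivity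
  simp only [phi0, dehomogenize, Prod.mk.injEq]
  constructor <;> field_simp

theorem phi1_dehomogenize {q p r : ℝ} (hq : 0 < q) (hr : 0 ≤ r) :
    phi1 (dehomogenize (q, p, r)) = dehomogenize (q + r, p, r) := by
  have : q + r ≠ 0 := by positivity
  simp only [phi1, dehomogenize, Prod.mk.injEq]
  constructor <;> field_simp

theorem phi1_iterate_dehomogenize (n : ℕ) {q p r : ℝ} (hq : 0 < q) (hr : 0 ≤ r) :
    phi1^[n] (dehomogenize (q, p, r)) = dehomogenize (q + n * r, p, r) := by
  induction n with
  | zero => simp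
  | succ n ih =>
    rw [Function.iterate_succ_apply', ih, phi1_dehomogenize (by positivity) hr]
    congr 2
    push_cast
    ring

theorem phi1_iterate_comp_phi0_dehomogenize (n : ℕ) {q p r : ℝ} (hq : 0 < q) (hp : 0 ≤ p)
    (hr : 0 ≤ r) :
    (phi1^[n] ∘ phi0) (dehomogenize (q, p, r)) = dehomogenize (q + r + n * p, q, p) := by
  rw [Function.comp_apply, phi0_dehomogenize hq hr,
    phi1_iterate_dehomogenize n (by positivity) hp]

def Xreal (a : ℕ → ℕ) (n : ℕ) : ℝ × ℝ × ℝ :=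
  ((Xv a n).1, (Xv a n).2.1, (Xv a n).2.2)

theorem Xreal_add_three (a : ℕ → ℕ) (n : ℕ) :
    Xreal a (n + 3) = Xreal a n + Xreal a (n + 2) + (a n : ℝ) • Xreal a (n + 1) := by
  simp only [Xreal, Xv, Prod.fst_add, Prod.snd_add, Prod.smul_fst, Prod.smul_snd, smul_eq_mul,
    Prod.mk_add_mk, Prod.smul_mk]
  push_cast
  rfl

theorem Xhat_Xv (a : ℕ → ℕ) (n : ℕ) : Xhat (Xv a n) = dehomogenize (Xreal a n) := rfl

theorem compPhi_dehomogenize (a : ℕ → ℕ) (k : ℕ) {q p r : ℝ} (hq : 0 < q) (hp : 0 ≤ p)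
    (hr : 0 ≤ r) :
    compPhi a k (dehomogenize (q, p, r)) =
      dehomogenize ((q - p) • Xreal a (k + 2) + p • Xreal a (k + 3) + r • Xreal a (k + 1)) := by
  induction k generalizing q p r with
  | zero =>
    rw [compPhi, phi1_iterate_comp_phi0_dehomogenize _ hq hp hr, Xreal_add_three]
    congr 1
    simp only [Xreal, Xv, Int.cast_one, Int.cast_zero, Prod.smul_mk, smul_eq_mul, mul_one,
      mul_zero, Prod.mk_add_mk, zero_add, add_zero, sub_add_cancel, Prod.ext_iff, and_true]
    ring
  | succ k ih =>
    rw [compPhi, Function.comp_apply, phi1_iterate_comp_phi0_dehomogenize _ hq hp hr,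
      ih (by positivity) hq.le hp, Xreal_add_three a (k + 1)]
    congr 1
    module

theorem compPhi_eq_dehomogenize (a : ℕ → ℕ) (k : ℕ) {x y : ℝ} (hx : 0 ≤ x) (hy : 0 ≤ y) :
    compPhi a k (x, y) =
      dehomogenize (x • Xreal a (k + 3) + ((1 - x) • Xreal a (k + 2) + y • Xreal a (k + 1))) := by
  rw [← dehomogenize_one_mk (x, y), compPhi_dehomogenize a k one_pos hx hy]
  congr 1
  abel

theorem compPhi_zero_zero (a : ℕ → ℕ) (k : ℕ) :
    compPhi a k (0, 0) = Xhat (Xv a (k + 2)) := by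
  rw [compPhi_eq_dehomogenize a k le_rfl le_rfl, Xhat_Xv]
  simp

section NormCone

variable {E : Type*} [SeminormedAddCommGroup E]

variable (E) in
def normCone : Set (ℝ × E) := {v | ‖v.2‖ ≤ v.1}

theorem add_mem_normCone {u v : ℝ × E} (hu : u ∈ normCone E) (hv : v ∈ normCone E) :
    u + v ∈ normCone E :=
  (norm_add_le u.2 v.2).trans (add_le_add hu hv)

theorem smul_mem_normCone [NormedSpace ℝ E] {c : ℝ} (hc : 0 ≤ c) {v : ℝ × E} (hv : v ∈ normCone E) :
    c • v ∈ normCone E := by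
  change ‖c • v.2‖ ≤ c * v.1
  rw [norm_smul, Real.norm_of_nonneg hc]
  exact mul_le_mul_of_nonneg_left hv hc

theorem norm_le_of_mem_normCone {v : ℝ × E} (hv : v ∈ normCone E) : ‖v‖ ≤ v.1 :=
  max_le (Real.norm_of_nonneg ((norm_nonneg _).trans hv)).le hv

end NormCone

theorem Xreal_mem_normCone (a : ℕ → ℕ) (n : ℕ) : Xreal a (n + 1) ∈ normCone (ℝ × ℝ) := by
  suffices h : ∀ n, Xreal a (n + 1) ∈ normCone (ℝ × ℝ) ∧ Xreal a (n + 2) ∈ normCone (ℝ × ℝ) ∧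
      Xreal a (n + 3) ∈ normCone (ℝ × ℝ) from (h n).1
  intro n
  induction n with
  | zero =>
    simp [normCone, Xreal, Xv, Prod.norm_def]
  | succ n ih =>
    obtain ⟨h1, h2, h3⟩ := ih
    refine ⟨h2, h3, ?_⟩
    rw [Xreal_add_three]
    exact add_mem_normCone (add_mem_normCone h1 h3) (smul_mem_normCone (Nat.cast_nonneg _) h2)

theorem Xreal_fst_nonneg (a : ℕ → ℕ) : ∀ n, 0 ≤ (Xreal a n).1
  | 0 => by simp [Xreal, Xv]
  | n + 1 => (norm_nonneg _).trans (Xreal_mem_normCone a n)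

theorem monotone_Xreal_fst (a : ℕ → ℕ) : Monotone fun n => (Xreal a (n + 1)).1 := by
  refine monotone_nat_of_le_succ fun n => ?_
  cases n with
  | zero => simp [Xreal, Xv]
  | succ n =>
    simp only [Xreal_add_three a n, Prod.fst_add, Prod.smul_fst, smul_eq_mul]
    nlinarith [Xreal_fst_nonneg a n, Xreal_fst_nonneg a (n + 1), (a n).cast_nonneg (α := ℝ)]

theorem Xreal_fst_pos (a : ℕ → ℕ) (n : ℕ) : 0 < (Xreal a (n + 1)).1 :=
  calc (0 : ℝ) < 1 := one_pos
    _ = (Xreal a 1).1 := by simp [Xreal, Xv]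
    _ ≤ (Xreal a (n + 1)).1 := monotone_Xreal_fst a (Nat.zero_le n)

theorem tendsto_inv_smul_lower_terms (a : ℕ → ℕ)
    (hq : Tendsto (fun k => (Xreal a (k + 3)).1 / (Xreal a (k + 2)).1) atTop atTop) (b c : ℝ) :
    Tendsto (fun k => (Xreal a (k + 3)).1⁻¹ • (b • Xreal a (k + 2) + c • Xreal a (k + 1)))
      atTop (𝓝 0) := by
  have hratio : Tendsto (fun k => (Xreal a (k + 2)).1 / (Xreal a (k + 3)).1) atTop (𝓝 0) :=
    (tendsto_inv_atTop_zero.comp hq).congr fun k => inv_div _ _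
  have hbound : ∀ j k, j ≤ k + 1 →
      ‖(Xreal a (k + 3)).1⁻¹ • Xreal a (j + 1)‖ ≤ (Xreal a (k + 2)).1 / (Xreal a (k + 3)).1 := by
    intro j k hjk
    rw [norm_smul, norm_inv, Real.norm_of_nonneg (Xreal_fst_nonneg a _), inv_mul_eq_div]
    exact div_le_div_of_nonneg_right
      ((norm_le_of_mem_normCone (Xreal_mem_normCone a j)).trans (monotone_Xreal_fst a hjk))
      (Xreal_fst_nonneg a _)
  have h2 := squeeze_zero_norm (fun k => hbound (k + 1) k le_rfl) hratio
  have h1 := squeeze_zero_norm (fun k => hbound k k k.le_succ) hratio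
  simpa [smul_add, smul_comm _ b, smul_comm _ c] using (h2.const_smul b).add (h1.const_smul c)

theorem tendsto_compPhi (a : ℕ → ℕ)
    (hq : Tendsto (fun k => (Xreal a (k + 3)).1 / (Xreal a (k + 2)).1) atTop atTop)
    {m : ℕ → ℕ} (hm : Tendsto m atTop atTop) {L : ℝ × ℝ}
    (hL : Tendsto (fun k => Xhat (Xv a (m k + 3))) atTop (𝓝 L)) {x y : ℝ} (hx : 0 < x)
    (hy : 0 ≤ y) : Tendsto (fun k => compPhi a (m k) (x, y)) atTop (𝓝 L) := by
  simp only [compPhi_eq_dehomogenize a _ hx.le hy]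
  exact tendsto_dehomogenize_smul_add hx.ne' (fun k => (Xreal_fst_pos a _).ne') hL
    ((tendsto_inv_smul_lower_terms a hq (1 - x) y).comp hm)

theorem fst_pos_of_mem_closure_tri {p : ℝ × ℝ} (hp : p ∈ closure tri) (h0 : p ≠ (0, 0)) :
    0 < p.1 ∧ 0 ≤ p.2 := by
  have hclosed : IsClosed {p : ℝ × ℝ | 0 ≤ p.2 ∧ p.2 ≤ p.1} :=
    (isClosed_le continuous_const continuous_snd).inter (isClosed_le continuous_snd continuous_fst)
  have hsub : tri ⊆ {p : ℝ × ℝ | 0 ≤ p.2 ∧ p.2 ≤ p.1} := fun q hq => ⟨hq.2.2.le, hq.2.1⟩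
  obtain ⟨hy, hyx⟩ := closure_minimal hsub hclosed hp
  refine ⟨lt_of_le_of_ne (hy.trans hyx) fun hx => h0 ?_, hy⟩
  exact Prod.ext hx.symm (le_antisymm (hx ▸ hyx) hy)

end

theorem nonconvergent_limits_general (a : ℕ → ℕ) (P Q : ℝ × ℝ)
    (hP : Tendsto (fun k : ℕ => Xhat (Xv a (2 * k + 3))) atTop (𝓝 P))
    (hQ : Tendsto (fun k : ℕ => Xhat (Xv a (2 * k + 4))) atTop (𝓝 Q))
    (hq : Tendsto (fun k : ℕ => ((Xv a (k + 3)).1 : ℝ) / ((Xv a (k + 2)).1 : ℝ)) atTop atTop) :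
    (∀ p ∈ closure tri \ {((0 : ℝ), (0 : ℝ))},
      Tendsto (fun k : ℕ => compPhi a (2 * k) p) atTop (𝓝 P) ∧
      Tendsto (fun k : ℕ => compPhi a (2 * k + 1) p) atTop (𝓝 Q)) ∧
    Tendsto (fun k : ℕ => compPhi a (2 * k) ((0 : ℝ), (0 : ℝ))) atTop (𝓝 Q) ∧
    Tendsto (fun k : ℕ => compPhi a (2 * k + 1) ((0 : ℝ), (0 : ℝ))) atTop (𝓝 P) := by
  have hEven : Tendsto (fun k : ℕ => 2 * k) atTop atTop :=
    tendsto_id.const_mul_atTop' two_pos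
  have hOdd : Tendsto (fun k : ℕ => 2 * k + 1) atTop atTop :=
    (tendsto_add_atTop_nat 1).comp hEven
  refine ⟨fun p ⟨hp, hp0⟩ => ?_, ?_, ?_⟩
  · obtain ⟨hx, hy⟩ := fst_pos_of_mem_closure_tri hp hp0
    exact ⟨tendsto_compPhi a hq hEven hP hx hy, tendsto_compPhi a hq hOdd hQ hx hy⟩
  · simp only [compPhi_zero_zero]
    exact (tendsto_add_atTop_iff_nat 1).1 hQ
  · simpa only [compPhi_zero_zero] using hP

/-- non-convergent case: if X̂_{2k} → 𝔭, X̂_{2k+1} → 𝔮 with 𝔭 ≠ 𝔮,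
d(X̂_{k-2} ⊕ X̂_k, X̂_k) → 0, and q_k/q_{k-1} → +∞, then for every
(x,y) ∈ △̄ ∖ {(0,0)} one has φ₁^{α₀}φ₀⋯φ₁^{α_{2k}}φ₀(x,y) → 𝔭 and
φ₁^{α₀}φ₀⋯φ₁^{α_{2k+1}}φ₀(x,y) → 𝔮, while the images of (0,0) converge to 𝔮 and 𝔭
respectively.  (Recall `Xv a (k+3) = X_k`.) -/
theorem nonconvergent_limits (a : ℕ → ℕ) (P Q : ℝ × ℝ)
    (hP : Tendsto (fun k : ℕ => Xhat (Xv a (2 * k + 3))) atTop (𝓝 P))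
    (hQ : Tendsto (fun k : ℕ => Xhat (Xv a (2 * k + 4))) atTop (𝓝 Q))
    (hPQ : P ≠ Q)
    (hmed : Tendsto (fun k : ℕ =>
        eucDist (Xhat (Xv a (k + 1) + Xv a (k + 3))) (Xhat (Xv a (k + 3)))) atTop (𝓝 0))
    (hq : Tendsto (fun k : ℕ => ((Xv a (k + 3)).1 : ℝ) / ((Xv a (k + 2)).1 : ℝ)) atTop atTop) :
    (∀ p ∈ closure tri \ {((0 : ℝ), (0 : ℝ))},
      Tendsto (fun k : ℕ => compPhi a (2 * k) p) atTop (𝓝 P) ∧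
      Tendsto (fun k : ℕ => compPhi a (2 * k + 1) p) atTop (𝓝 Q)) ∧
    Tendsto (fun k : ℕ => compPhi a (2 * k) ((0 : ℝ), (0 : ℝ))) atTop (𝓝 Q) ∧
    Tendsto (fun k : ℕ => compPhi a (2 * k + 1) ((0 : ℝ), (0 : ℝ))) atTop (𝓝 P) :=
  nonconvergent_limits_general a P Q hP hQ hq
end

section
/- Let (α,β) be a point of the topological interior of △ whose triangle sequence is finite and equal to [α₀,…,α_k], i.e. T^j(α,β) ∈ △_{α_j} for j = 0,…,k and T^{k+1}(α,β) ∈ Λ. Then there exists a unique ξ ∈ (0,1) such that (α,β) = φ₁^{α₀}φ₀ ⋯ φ₁^{α_k}φ₀ φ₂(ξ,ξ). -/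
def phi2 (p : ℝ × ℝ) : ℝ × ℝ := (p.1, 0)

/-- The subtriangle △_k. -/
def triK (k : ℕ) : Set (ℝ × ℝ) :=
  {p | p ∈ tri ∧ 1 - p.1 - (k : ℝ) * p.2 ≥ 0 ∧ 1 - p.1 - ((k : ℝ) + 1) * p.2 < 0}

/-- Λ = {(x,0) : 0 ≤ x ≤ 1}. -/
def LambdaSet : Set (ℝ × ℝ) := {p | 0 ≤ p.1 ∧ p.1 ≤ 1 ∧ p.2 = 0}

/-- The Triangle map `T(x,y) = (y/x, (1-x-ky)/x)` for `(x,y) ∈ △_k`; the index `k`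
is recovered as `⌊(1-x)/y⌋`. -/
noncomputable def Tmap (p : ℝ × ℝ) : ℝ × ℝ :=
  (p.2 / p.1, (1 - p.1 - (⌊(1 - p.1) / p.2⌋ : ℝ) * p.2) / p.1)

/-!
On `△_m` the Triangle map is inverted by `φ₁^m φ₀`, so following the orbit
`T^{k+1}(α,β) = (ξ, 0) = φ₂(ξ,ξ)` backwards gives the representation; `ξ = y/x` for
`(x,y) = T^k(α,β)`, and `y < x` because this point is either `(α,β)` itself, which lies in the
interior of `△`, or the image under `T` of a point of some `△_m`. Uniqueness holds because
`φ₀` and `φ₁` are injective on the closed positive quadrant and map it into itself.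
-/

open Set Filter Topology

lemma mapsTo_phi0 : MapsTo phi0 (Ici 0) (Ici 0) := fun p ⟨hx, hy⟩ => by
  have h : (0 : ℝ) < 1 + p.2 := by simp only [Prod.snd_zero] at hy; linarith
  exact ⟨div_nonneg zero_le_one h.le, div_nonneg hx h.le⟩

lemma mapsTo_phi1 : MapsTo phi1 (Ici 0) (Ici 0) := fun p ⟨hx, hy⟩ => by
  have h : (0 : ℝ) < 1 + p.2 := by simp only [Prod.snd_zero] at hy; linarith
  exact ⟨div_nonneg hx h.le, div_nonneg hy h.le⟩

lemma injOn_phi0 : InjOn phi0 (Ici 0) := by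
  rintro p ⟨-, hp⟩ q ⟨-, hq⟩ h
  have hp' : (1 : ℝ) + p.2 ≠ 0 := by simp only [Prod.snd_zero] at hp; linarith
  have hq' : (1 : ℝ) + q.2 ≠ 0 := by simp only [Prod.snd_zero] at hq; linarith
  obtain ⟨h1, h2⟩ := Prod.ext_iff.1 h
  simp only [phi0] at h1 h2
  have e2 : p.2 = q.2 := by field_simp at h1; linarith
  rw [e2] at h2
  exact Prod.ext (by field_simp at h2; exact h2) e2

lemma injOn_phi1 : InjOn phi1 (Ici 0) := by
  rintro p ⟨-, hp⟩ q ⟨-, hq⟩ h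
  have hp' : (1 : ℝ) + p.2 ≠ 0 := by simp only [Prod.snd_zero] at hp; linarith
  have hq' : (1 : ℝ) + q.2 ≠ 0 := by simp only [Prod.snd_zero] at hq; linarith
  obtain ⟨h1, h2⟩ := Prod.ext_iff.1 h
  simp only [phi1] at h1 h2
  have e2 : p.2 = q.2 := by field_simp at h2; linarith
  rw [e2] at h1
  exact Prod.ext (by field_simp at h1; exact h1) e2

lemma mapsTo_phi1_iterate_comp_phi0 (m : ℕ) : MapsTo (phi1^[m] ∘ phi0) (Ici 0) (Ici 0) :=
  (mapsTo_phi1.iterate m).comp mapsTo_phi0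

lemma injOn_phi1_iterate_comp_phi0 (m : ℕ) : InjOn (phi1^[m] ∘ phi0) (Ici 0) :=
  (injOn_phi1.iterate mapsTo_phi1 m).comp injOn_phi0 mapsTo_phi0

lemma injOn_compPhi (a : ℕ → ℕ) : ∀ k, InjOn (compPhi a k) (Ici 0)
  | 0 => injOn_phi1_iterate_comp_phi0 (a 0)
  | k + 1 => (injOn_compPhi a k).comp (injOn_phi1_iterate_comp_phi0 (a (k + 1)))
      (mapsTo_phi1_iterate_comp_phi0 (a (k + 1)))

lemma phi1_iterate_apply (m : ℕ) {p : ℝ × ℝ} (hp : 0 ≤ p.2) :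
    phi1^[m] p = (p.1 / (1 + m * p.2), p.2 / (1 + m * p.2)) := by
  induction m with
  | zero => simp
  | succ m ih =>
    have hm : (0 : ℝ) < 1 + m * p.2 := by positivity
    rw [Function.iterate_succ_apply', ih]
    simp only [phi1, Nat.cast_succ]
    have hden : 1 + p.2 / (1 + m * p.2) = (1 + (m + 1) * p.2) / (1 + m * p.2) := by
      field_simp; ring
    rw [hden, div_div_div_cancel_right₀ hm.ne', div_div_div_cancel_right₀ hm.ne']

lemma floor_eq_of_mem_triK {m : ℕ} {w : ℝ × ℝ} (hw : w ∈ triK m) :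
    ⌊(1 - w.1) / w.2⌋ = m := by
  obtain ⟨⟨-, -, hy⟩, hlow, hhigh⟩ := hw
  rw [Int.floor_eq_iff, le_div_iff₀ hy, div_lt_iff₀ hy]
  push_cast
  constructor <;> linarith

lemma Tmap_of_mem_triK {m : ℕ} {w : ℝ × ℝ} (hw : w ∈ triK m) :
    Tmap w = (w.2 / w.1, (1 - w.1 - m * w.2) / w.1) := by
  simp only [Tmap, floor_eq_of_mem_triK hw, Int.cast_natCast]

lemma Tmap_snd_lt_fst {m : ℕ} {w : ℝ × ℝ} (hw : w ∈ triK m) : (Tmap w).2 < (Tmap w).1 := by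
  rw [Tmap_of_mem_triK hw]
  obtain ⟨⟨-, hxy, hy⟩, -, hhigh⟩ := hw
  exact div_lt_div_of_pos_right (by linarith) (hy.trans_le hxy)

lemma phi1_iterate_phi0_Tmap {m : ℕ} {w : ℝ × ℝ} (hw : w ∈ triK m) :
    phi1^[m] (phi0 (Tmap w)) = w := by
  obtain ⟨⟨-, hxy, hy⟩, hlow, -⟩ := id hw
  have hx : 0 < w.1 := hy.trans_le hxy
  have hm : 0 < 1 - m * w.2 := by linarith
  have hphi0 : phi0 (Tmap w) = (w.1 / (1 - m * w.2), w.2 / (1 - m * w.2)) := by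
    rw [Tmap_of_mem_triK hw]
    simp only [phi0]
    ext <;> field_simp <;> ring
  have hden : 1 + m * (w.2 / (1 - m * w.2)) = 1 / (1 - m * w.2) := by field_simp; ring
  rw [hphi0, phi1_iterate_apply m (by positivity), hden,
    div_div_div_cancel_right₀ hm.ne', div_div_div_cancel_right₀ hm.ne', div_one, div_one]

lemma compPhi_Tmap_iterate (a : ℕ → ℕ) {z : ℝ × ℝ} :
    ∀ k, (∀ j ≤ k, Tmap^[j] z ∈ triK (a j)) → compPhi a k (Tmap^[k + 1] z) = z
  | 0, hts => phi1_iterate_phi0_Tmap (hts 0 le_rfl)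
  | k + 1, hts => by
    rw [compPhi, Function.comp_apply, Function.iterate_succ_apply' Tmap (k + 1),
      Function.comp_apply, phi1_iterate_phi0_Tmap (hts (k + 1) le_rfl)]
    exact compPhi_Tmap_iterate a k fun j hj => hts j (hj.trans k.le_succ)

lemma snd_lt_fst_of_mem_interior_tri {z : ℝ × ℝ} (hz : z ∈ interior tri) : z.2 < z.1 := by
  have hpath : Tendsto (fun t : ℝ => (z.1, z.2 + t)) (𝓝 0) (𝓝 z) :=
    (by fun_prop : Continuous fun t : ℝ => (z.1, z.2 + t)).tendsto' 0 z (by simp)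
  have hnear : ∀ᶠ t in 𝓝[>] (0 : ℝ), (z.1, z.2 + t) ∈ tri :=
    nhdsWithin_le_nhds (hpath (mem_interior_iff_mem_nhds.1 hz))
  obtain ⟨t, ⟨-, hle, -⟩, ht⟩ := (hnear.and self_mem_nhdsWithin).exists
  exact lt_of_lt_of_le (lt_add_of_pos_right _ ht) hle

/-- if (α,β) is in the topological interior of △ and has finite triangle
sequence [α₀,…,α_k] (i.e. T^j(α,β) ∈ △_{α_j} for j ≤ k and T^{k+1}(α,β) ∈ Λ), then there
is a unique ξ ∈ (0,1) with (α,β) = φ₁^{α₀}φ₀ ⋯ φ₁^{α_k}φ₀ φ₂(ξ,ξ). -/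
theorem exists_unique_xi (a : ℕ → ℕ) (k : ℕ) (z : ℝ × ℝ)
    (hint : z ∈ interior tri)
    (hts : ∀ j ≤ k, Tmap^[j] z ∈ triK (a j))
    (hlast : Tmap^[k + 1] z ∈ LambdaSet) :
    ∃! ξ : ℝ, ξ ∈ Set.Ioo (0 : ℝ) 1 ∧ z = compPhi a k (phi2 (ξ, ξ)) := by
  set w := Tmap^[k] z
  have hw : w ∈ triK (a k) := hts k le_rfl
  have hlt : w.2 < w.1 := by
    cases k with
    | zero => exact snd_lt_fst_of_mem_interior_tri hint
    | succ k =>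
      simpa only [w, Function.iterate_succ_apply'] using Tmap_snd_lt_fst (hts k k.le_succ)
  have hend : Tmap^[k + 1] z = phi2 ((Tmap w).1, (Tmap w).1) := by
    rw [Function.iterate_succ_apply']
    exact Prod.ext rfl (by simpa only [phi2, Function.iterate_succ_apply'] using hlast.2.2)
  have hξ₀ : (Tmap w).1 ∈ Ioo 0 1 := by
    have hy : 0 < w.2 := hw.1.2.2
    rw [Tmap_of_mem_triK hw]
    exact ⟨div_pos hy (hy.trans hlt), (div_lt_one (hy.trans hlt)).2 hlt⟩
  have hrep₀ : z = compPhi a k (phi2 ((Tmap w).1, (Tmap w).1)) := by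
    rw [← hend, compPhi_Tmap_iterate a k hts]
  refine ⟨(Tmap w).1, ⟨hξ₀, hrep₀⟩, ?_⟩
  rintro ξ ⟨hξ, hrep⟩
  have hdiag : ∀ t : ℝ, t ∈ Ioo 0 1 → phi2 (t, t) ∈ Ici 0 := fun t ht => ⟨ht.1.le, le_rfl⟩
  exact congrArg Prod.fst
    (injOn_compPhi a k (hdiag ξ hξ) (hdiag _ hξ₀) (hrep.symm.trans hrep₀))
end

section
/- Let (α,β) be a point of the topological interior of △ with finite triangle sequence [α₀,…,α_k], and let ξ ∈ (0,1) be the unique number with (α,β) = φ₁^{α₀}φ₀ ⋯ φ₁^{α_k}φ₀ φ₂(ξ,ξ). Then ξ is rational if and only if both α and β are rational. -/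
/-! On the closed quadrant `0 ≤ p`, which `φ₀` and `φ₁` preserve, both maps are inverted by
field operations: `(u, v) = φ₀ (x, y)` gives `y = u⁻¹ - 1` and `x = v u⁻¹`, while
`(u, v) = φ₁ (x, y)` gives `y = (1 - v)⁻¹ - 1` and `x = u (1 - v)⁻¹`. Hence for every subfield
`K` of `ℝ` the point `φ₁^{α₀}φ₀ ⋯ φ₁^{α_k}φ₀ (ξ, 0)` has both coordinates in `K` iff `ξ ∈ K`. -/

section Nonneg

variable {p : ℝ × ℝ}

lemma phi0_nonneg (hp : 0 ≤ p) : 0 ≤ phi0 p := by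
  obtain ⟨hx, hy⟩ : 0 ≤ p.1 ∧ 0 ≤ p.2 := hp
  show 0 ≤ 1 / (1 + p.2) ∧ 0 ≤ p.1 / (1 + p.2)
  constructor <;> positivity

lemma phi1_nonneg (hp : 0 ≤ p) : 0 ≤ phi1 p := by
  obtain ⟨hx, hy⟩ : 0 ≤ p.1 ∧ 0 ≤ p.2 := hp
  show 0 ≤ p.1 / (1 + p.2) ∧ 0 ≤ p.2 / (1 + p.2)
  constructor <;> positivity

lemma iterate_phi1_nonneg (n : ℕ) (hp : 0 ≤ p) : 0 ≤ phi1^[n] p :=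
  Function.Iterate.rec _ hp (fun _ => phi1_nonneg) n

lemma one_add_snd_ne_zero (hp : 0 ≤ p) : 1 + p.2 ≠ 0 := by
  have : (0 : ℝ) ≤ p.2 := hp.2
  positivity

end Nonneg

section Subfield

variable (K : Subfield ℝ) {p : ℝ × ℝ}

local notation:max S "²" => Set.prod (S : Set ℝ) (S : Set ℝ)

lemma phi0_mem_iff (hp : 1 + p.2 ≠ 0) : phi0 p ∈ K² ↔ p ∈ K² := by
  obtain ⟨x, y⟩ := p
  simp only [phi0] at hp ⊢
  constructor
  · rintro ⟨hu, hv⟩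
    have hy : y = (1 / (1 + y))⁻¹ - 1 := by rw [one_div, inv_inv]; ring
    have hx : x = x / (1 + y) * (1 / (1 + y))⁻¹ := by field_simp
    exact ⟨hx ▸ K.mul_mem hv (K.inv_mem hu), hy ▸ K.sub_mem (K.inv_mem hu) K.one_mem⟩
  · rintro ⟨hx, hy⟩
    have h1y := K.add_mem K.one_mem hy
    exact ⟨K.div_mem K.one_mem h1y, K.div_mem hx h1y⟩

lemma phi1_mem_iff (hp : 1 + p.2 ≠ 0) : phi1 p ∈ K² ↔ p ∈ K² := by
  obtain ⟨x, y⟩ := p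
  simp only [phi1] at hp ⊢
  constructor
  · rintro ⟨hu, hv⟩
    have hw : 1 - y / (1 + y) = 1 / (1 + y) := by field_simp; ring
    have hy : y = (1 - y / (1 + y))⁻¹ - 1 := by rw [hw, one_div, inv_inv]; ring
    have hx : x = x / (1 + y) * (1 - y / (1 + y))⁻¹ := by rw [hw]; field_simp
    have hw_mem := K.inv_mem (K.sub_mem K.one_mem hv)
    exact ⟨hx ▸ K.mul_mem hu hw_mem, hy ▸ K.sub_mem hw_mem K.one_mem⟩
  · rintro ⟨hx, hy⟩
    have h1y := K.add_mem K.one_mem hy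
    exact ⟨K.div_mem hx h1y, K.div_mem hy h1y⟩

lemma iterate_phi1_mem_iff (n : ℕ) (hp : 0 ≤ p) : phi1^[n] p ∈ K² ↔ p ∈ K² := by
  induction n with
  | zero => rfl
  | succ n ih =>
    rw [Function.iterate_succ_apply',
      phi1_mem_iff K (one_add_snd_ne_zero (iterate_phi1_nonneg n hp)), ih]

lemma iterate_phi1_phi0_mem_iff (n : ℕ) (hp : 0 ≤ p) :
    phi1^[n] (phi0 p) ∈ K² ↔ p ∈ K² := by
  rw [iterate_phi1_mem_iff K n (phi0_nonneg hp), phi0_mem_iff K (one_add_snd_ne_zero hp)]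

lemma compPhi_mem_iff (a : ℕ → ℕ) (k : ℕ) (hp : 0 ≤ p) :
    compPhi a k p ∈ K² ↔ p ∈ K² := by
  induction k generalizing p with
  | zero => exact iterate_phi1_phi0_mem_iff K (a 0) hp
  | succ k ih =>
    have hq := iterate_phi1_nonneg (a (k + 1)) (phi0_nonneg hp)
    exact (ih hq).trans (iterate_phi1_phi0_mem_iff K (a (k + 1)) hp)

end Subfield

theorem xi_rational_iff_general (a : ℕ → ℕ) (k : ℕ) (z : ℝ × ℝ)
    (ξ : ℝ) (hξ : ξ ∈ Set.Ioo (0 : ℝ) 1)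
    (heq : z = compPhi a k (phi2 (ξ, ξ))) :
    (∃ m : ℚ, (m : ℝ) = ξ) ↔ ((∃ m : ℚ, (m : ℝ) = z.1) ∧ (∃ m : ℚ, (m : ℝ) = z.2)) := by
  have hstart : 0 ≤ phi2 (ξ, ξ) := ⟨hξ.1.le, le_rfl⟩
  have hmem := compPhi_mem_iff (Rat.castHom ℝ).fieldRange a k hstart
  rw [← heq] at hmem
  -- membership in `(Rat.castHom ℝ).fieldRange` unfolds to `∃ m : ℚ, (m : ℝ) = _`
  exact (and_iff_left ⟨0, Rat.cast_zero⟩).symm.trans hmem.symm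

/-- with (α,β) an interior point of △ of finite triangle sequence
[α₀,…,α_k] and ξ ∈ (0,1) the unique number with (α,β) = φ₁^{α₀}φ₀⋯φ₁^{α_k}φ₀φ₂(ξ,ξ),
ξ is rational iff both α and β are rational. -/
theorem xi_rational_iff (a : ℕ → ℕ) (k : ℕ) (z : ℝ × ℝ)
    (hint : z ∈ interior tri)
    (hts : ∀ j ≤ k, Tmap^[j] z ∈ triK (a j))
    (hlast : Tmap^[k + 1] z ∈ LambdaSet)
    (ξ : ℝ) (hξ : ξ ∈ Set.Ioo (0 : ℝ) 1)
    (heq : z = compPhi a k (phi2 (ξ, ξ))) :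
    (∃ m : ℚ, (m : ℝ) = ξ) ↔ ((∃ m : ℚ, (m : ℝ) = z.1) ∧ (∃ m : ℚ, (m : ℝ) = z.2)) :=
  xi_rational_iff_general a k z ξ hξ heq
end

section
/- Let a/b ∈ ℚ ∩ (0,1) have continued fraction expansion [a₁,…,a_n] with a_n ≥ 2. Then (a/b, a/b) = φ₁^{a₁−1}φ₀²φ₂ ⋯ φ₁^{a_{n−1}−1}φ₀²φ₂ φ₁^{a_n−2}(1/2, 1/2); moreover (a/b, 0) = φ₂ applied to this same point, and (1, a/b) = φ₀ φ₂ applied to this same point. -/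
/-- The value of the finite regular continued fraction [a₁,…,a_n] = 1/(a₁+1/(a₂+⋯+1/a_n)). -/
noncomputable def cfVal : List ℕ → ℝ
  | [] => 0
  | a :: t => 1 / ((a : ℝ) + cfVal t)

/-- The composition φ₁^{a₁-1}φ₀²φ₂ ⋯ φ₁^{a_{n-1}-1}φ₀²φ₂ φ₁^{a_n-2} associated to
the continued fraction [a₁,…,a_n]. -/
noncomputable def cfComp : List ℕ → (ℝ × ℝ → ℝ × ℝ)
  | [] => id
  | [a] => phi1^[a - 2]
  | a :: t => phi1^[a - 1] ∘ phi0 ∘ phi0 ∘ phi2 ∘ cfComp t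

lemma phi1_pt (c : ℝ) (hc : 0 < c) : phi1 (1/c, 1/c) = (1/(c+1), 1/(c+1)) := by
  have h1 : c ≠ 0 := hc.ne'
  have h2 : c + 1 ≠ 0 := by positivity
  have h3 : 1 + 1/c ≠ 0 := by positivity
  simp only [phi1, Prod.mk.injEq]
  constructor <;> (field_simp; try ring)

lemma phi1_iter (n : ℕ) (c : ℝ) (hc : 0 < c) :
    phi1^[n] (1/c, 1/c) = (1/(c+n), 1/(c+n)) := by
  induction n with
  | zero => simp
  | succ n ih =>
    rw [Function.iterate_succ_apply', ih, phi1_pt (c+n) (by positivity)]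
    have : c + (n:ℝ) + 1 = c + ((n+1 : ℕ) : ℝ) := by push_cast; ring
    rw [this]

lemma cfComp_eq : ∀ (l : List ℕ) (hl : l ≠ []) (_ : ∀ x ∈ l, 1 ≤ x)
    (_ : 2 ≤ l.getLast hl),
    0 < cfVal l ∧ cfComp l (1/2, 1/2) = (cfVal l, cfVal l)
  | [], hl, _, _ => absurd rfl hl
  | [a], _, _, hlast => by
      have ha : 2 ≤ a := by simpa using hlast
      have ha' : (0:ℝ) < a := by positivity
      have hv : cfVal [a] = 1/(a:ℝ) := by simp [cfVal]
      constructor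
      · rw [hv]; positivity
      · have : cfComp [a] = phi1^[a-2] := rfl
        rw [this]
        have h12 : ((1:ℝ)/2, (1:ℝ)/2) = (1/(2:ℝ), 1/(2:ℝ)) := by norm_num
        rw [h12, phi1_iter (a-2) 2 (by norm_num), hv]
        have : (2:ℝ) + ((a-2 : ℕ) : ℝ) = a := by
          rw [Nat.cast_sub ha]; push_cast; ring
        rw [this]
  | a :: b :: t, _, hpos, hlast => by
      have ha : 1 ≤ a := hpos a (by simp)
      have hlast' : 2 ≤ (b :: t).getLast (by simp) := by
        rwa [List.getLast_cons] at hlast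
      obtain ⟨hv, hc⟩ := cfComp_eq (b :: t) (by simp)
        (fun x hx => hpos x (List.mem_cons_of_mem a hx)) hlast'
      set v := cfVal (b :: t) with hvdef
      have h1v : (0:ℝ) < 1 + v := by positivity
      constructor
      · show 0 < 1 / ((a:ℝ) + v)
        have : (0:ℝ) < a := by exact_mod_cast Nat.lt_of_lt_of_le Nat.zero_lt_one ha
        positivity
      · show (phi1^[a-1] ∘ phi0 ∘ phi0 ∘ phi2 ∘ cfComp (b :: t)) (1/2, 1/2) = _
        have step : (phi0 ∘ phi0 ∘ phi2) (v, v) = (1/(1+v), 1/(1+v)) := by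
          simp only [Function.comp_apply, phi2, phi0]
          norm_num
        simp only [Function.comp_apply, hc]
        have := step
        simp only [Function.comp_apply] at this
        rw [this, phi1_iter (a-1) (1+v) h1v]
        have hcast : (1:ℝ) + v + ((a-1 : ℕ) : ℝ) = (a:ℝ) + v := by
          rw [Nat.cast_sub ha]; push_cast; ring
        rw [hcast]
        rfl

/-- if a/b ∈ ℚ ∩ (0,1) has continued fraction expansion [a₁,…,a_n]
with a_n ≥ 2, then (a/b, a/b) = φ₁^{a₁-1}φ₀²φ₂ ⋯ φ₁^{a_{n-1}-1}φ₀²φ₂ φ₁^{a_n-2}(1/2,1/2);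
moreover (a/b, 0) = φ₂ of this point and (1, a/b) = φ₀φ₂ of this point. -/
theorem cf_backward_image (a b : ℕ) (ha : 0 < a) (hab : a < b)
    (l : List ℕ) (hl : l ≠ []) (hpos : ∀ x ∈ l, 1 ≤ x) (hlast : 2 ≤ l.getLast hl)
    (hcf : (a : ℝ) / (b : ℝ) = cfVal l) :
    ((a : ℝ) / (b : ℝ), (a : ℝ) / (b : ℝ)) = cfComp l (1 / 2, 1 / 2) ∧
    ((a : ℝ) / (b : ℝ), (0 : ℝ)) = phi2 (cfComp l (1 / 2, 1 / 2)) ∧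
    ((1 : ℝ), (a : ℝ) / (b : ℝ)) = phi0 (phi2 (cfComp l (1 / 2, 1 / 2))) := by
  obtain ⟨hv, hc⟩ := cfComp_eq l hl hpos hlast
  rw [hc, ← hcf]
  refine ⟨rfl, rfl, ?_⟩
  simp [phi0, phi2]
end

section
/- Let (p/q, r/q) be a rational pair in the topological interior of △ whose (finite) triangle sequence is [α₀,…,α_k], and let ξ be the unique number in (0,1) with (p/q,r/q) = φ₁^{α₀}φ₀ ⋯ φ₁^{α_k}φ₀ φ₂(ξ,ξ); let [a₁,…,a_n] be the continued fraction expansion of ξ with a_n ≥ 2. Then (p/q, r/q) = φ₁^{α₀}φ₀ ⋯ φ₁^{α_k}φ₀ ∘ φ₂ ∘ φ₁^{a₁−1}φ₀²φ₂ ⋯ φ₁^{a_{n−1}−1}φ₀²φ₂ φ₁^{a_n−2}(1/2, 1/2). -/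
lemma div_div_div_same (x b c : ℝ) (hb : b ≠ 0) (hc : c ≠ 0) :
    x / c / (b / c) = x / b := by
  field_simp

lemma phi1_iter_s11 (m : ℕ) (x y : ℝ) (hy : 0 ≤ y) :
    phi1^[m] (x, y) = (x / (1 + m * y), y / (1 + m * y)) := by
  induction m with
  | zero => simp
  | succ n ih =>
    have h1 : (0:ℝ) < 1 + n * y := by positivity
    have h2 : (0:ℝ) < 1 + (n+1) * y := by positivity
    rw [Function.iterate_succ_apply', ih, phi1]
    have : 1 + y / (1 + n * y) = (1 + (n+1) * y) / (1 + n * y) := by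
      field_simp; ring
    simp only [this, Prod.mk.injEq]
    push_cast
    constructor <;> exact div_div_div_same _ _ _ h2.ne' h1.ne'

lemma cfVal_nonneg (l : List ℕ) (hpos : ∀ x ∈ l, 1 ≤ x) : 0 ≤ cfVal l := by
  induction l with
  | nil => simp [cfVal]
  | cons a t ih =>
    have ha : 1 ≤ a := hpos a (by simp)
    have ht : 0 ≤ cfVal t := ih (fun x hx => hpos x (by simp [hx]))
    have : (0:ℝ) < (a:ℝ) + cfVal t := by
      have : (1:ℝ) ≤ (a:ℝ) := by exact_mod_cast ha
      linarith
    simp only [cfVal]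
    positivity

lemma cfComp_eval (l : List ℕ) (hl : l ≠ []) (hpos : ∀ x ∈ l, 1 ≤ x)
    (hlast : 2 ≤ l.getLast hl) :
    cfComp l (1 / 2, 1 / 2) = (cfVal l, cfVal l) := by
  induction l with
  | nil => exact absurd rfl hl
  | cons a t ih =>
    match t with
    | [] =>
      have ha : 2 ≤ a := by simpa using hlast
      have : cfComp [a] = phi1^[a-2] := rfl
      rw [this, phi1_iter_s11 _ _ _ (by norm_num)]
      have hc : ((a - 2 : ℕ) : ℝ) = (a:ℝ) - 2 := by
        have : (2:ℕ) ≤ a := ha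
        push_cast [Nat.cast_sub this]; ring
      rw [hc]
      have ha' : (2:ℝ) ≤ (a:ℝ) := by exact_mod_cast ha
      have : 1 + ((a:ℝ) - 2) * (1/2) = a / 2 := by ring
      rw [this]
      have hane : (a:ℝ) ≠ 0 := by linarith
      simp only [cfVal, Prod.mk.injEq, add_zero]
      constructor <;> exact div_div_div_same _ _ _ hane two_ne_zero
    | b :: t' =>
      have hrec : cfComp (b :: t') (1/2, 1/2) = (cfVal (b :: t'), cfVal (b :: t')) := by
        apply ih (by simp) (fun x hx => hpos x (by simp [hx]))
        rwa [List.getLast_cons (by simp)] at hlast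
      set v := cfVal (b :: t') with hv
      have hv0 : 0 ≤ v := cfVal_nonneg _ (fun x hx => hpos x (by simp [hx]))
      have ha : 1 ≤ a := hpos a (by simp)
      have : cfComp (a :: b :: t') (1/2,1/2)
          = phi1^[a-1] (phi0 (phi0 (phi2 (cfComp (b :: t') (1/2,1/2))))) := rfl
      rw [this, hrec]
      have h1v : (0:ℝ) < 1 + v := by linarith
      have e1 : phi0 (phi0 (phi2 (v, v))) = (1/(1+v), 1/(1+v)) := by
        simp [phi0, phi2]
      rw [e1, phi1_iter_s11 _ _ _ (by positivity)]
      have hc : ((a - 1 : ℕ) : ℝ) = (a:ℝ) - 1 := by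
        push_cast [Nat.cast_sub ha]; ring
      rw [hc]
      have hav : (0:ℝ) < (a:ℝ) + v := by
        have : (1:ℝ) ≤ (a:ℝ) := by exact_mod_cast ha
        linarith
      have e2 : 1 + ((a:ℝ) - 1) * (1/(1+v)) = ((a:ℝ) + v) / (1 + v) := by
        field_simp; ring
      rw [e2]
      rw [show cfVal (a :: b :: t') = 1 / ((a:ℝ) + v) from rfl, Prod.mk.injEq]
      constructor <;> exact div_div_div_same _ _ _ hav.ne' h1v.ne'

/-- let (p/q, r/q) be an interior rational pair with finite triangle
sequence [α₀,…,α_k], let ξ ∈ (0,1) be the unique number with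
(p/q,r/q) = φ₁^{α₀}φ₀⋯φ₁^{α_k}φ₀φ₂(ξ,ξ), and let [a₁,…,a_n] (a_n ≥ 2) be the continued
fraction expansion of ξ.  Then
(p/q,r/q) = φ₁^{α₀}φ₀⋯φ₁^{α_k}φ₀ ∘ φ₂ ∘ φ₁^{a₁-1}φ₀²φ₂ ⋯ φ₁^{a_{n-1}-1}φ₀²φ₂ φ₁^{a_n-2}(1/2,1/2). -/
theorem rational_backward_image (a : ℕ → ℕ) (k : ℕ) (p r q : ℤ) (hq : 0 < q)
    (hint : ((p : ℝ) / (q : ℝ), (r : ℝ) / (q : ℝ)) ∈ interior tri)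
    (hts : ∀ j ≤ k, Tmap^[j] ((p : ℝ) / (q : ℝ), (r : ℝ) / (q : ℝ)) ∈ triK (a j))
    (hlast : Tmap^[k + 1] ((p : ℝ) / (q : ℝ), (r : ℝ) / (q : ℝ)) ∈ LambdaSet)
    (ξ : ℝ) (hξ : ξ ∈ Set.Ioo (0 : ℝ) 1)
    (heq : ((p : ℝ) / (q : ℝ), (r : ℝ) / (q : ℝ)) = compPhi a k (phi2 (ξ, ξ)))
    (l : List ℕ) (hl : l ≠ []) (hpos : ∀ x ∈ l, 1 ≤ x) (hlastl : 2 ≤ l.getLast hl)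
    (hcf : ξ = cfVal l) :
    ((p : ℝ) / (q : ℝ), (r : ℝ) / (q : ℝ))
      = compPhi a k (phi2 (cfComp l (1 / 2, 1 / 2))) := by
  rw [heq, cfComp_eval l hl hpos hlastl, ← hcf]
end

section
/- The maps φ₀ and φ₁ commute with the mediant operation: for positive integers q, q' and integers p, r, p', r' with (p/q, r/q) and (p'/q', r'/q') in △̄, one has φ₀((p+p')/(q+q'), (r+r')/(q+q')) = ((q+q')/(q+q'+r+r'), (p+p')/(q+q'+r+r')), which is the mediant of φ₀(p/q,r/q) = (q/(q+r), p/(q+r)) and φ₀(p'/q',r'/q') = (q'/(q'+r'), p'/(q'+r')); similarly φ₁((p+p')/(q+q'), (r+r')/(q+q')) = ((p+p')/(q+q'+r+r'), (r+r')/(q+q'+r+r')) is the mediant of φ₁(p/q,r/q) = (p/(q+r), r/(q+r)) and φ₁(p'/q',r'/q') = (p'/(q'+r'), r'/(q'+r')). -/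

lemma tri_closure_snd_nonneg {x : ℝ × ℝ} (h : x ∈ closure tri) : 0 ≤ x.2 := by
  have hsub : tri ⊆ {p : ℝ × ℝ | 0 ≤ p.2} := fun p hp => le_of_lt hp.2.2
  have hcl : IsClosed {p : ℝ × ℝ | 0 ≤ p.2} :=
    isClosed_le continuous_const continuous_snd
  exact (closure_minimal hsub hcl) h

lemma phi0_eq (a b c : ℝ) (hb : 0 < b) (hc : 0 ≤ c) :
    phi0 (a / b, c / b) = (b / (b + c), a / (b + c)) := by
  have hb' : b ≠ 0 := ne_of_gt hb
  have hbc : b + c ≠ 0 := ne_of_gt (by linarith)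
  unfold phi0
  simp only [Prod.mk.injEq]
  constructor <;> (field_simp; try ring)

lemma phi1_eq (a b c : ℝ) (hb : 0 < b) (hc : 0 ≤ c) :
    phi1 (a / b, c / b) = (a / (b + c), c / (b + c)) := by
  have hb' : b ≠ 0 := ne_of_gt hb
  have hbc : b + c ≠ 0 := ne_of_gt (by linarith)
  unfold phi1
  simp only [Prod.mk.injEq]
  constructor <;> (field_simp; try ring)

/-- φ₀ and φ₁ commute with the mediant operation.  For (p/q, r/q) and
(p'/q', r'/q') in △̄, φ₀ sends the mediant ((p+p')/(q+q'), (r+r')/(q+q')) to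
((q+q')/(q+q'+r+r'), (p+p')/(q+q'+r+r')), which is the mediant of
φ₀(p/q,r/q) = (q/(q+r), p/(q+r)) and φ₀(p'/q',r'/q') = (q'/(q'+r'), p'/(q'+r'));
and similarly for φ₁. -/
theorem phi_commute_mediant (q q' p r p' r' : ℤ) (hq : 0 < q) (hq' : 0 < q')
    (h1 : ((p : ℝ) / (q : ℝ), (r : ℝ) / (q : ℝ)) ∈ closure tri)
    (h2 : ((p' : ℝ) / (q' : ℝ), (r' : ℝ) / (q' : ℝ)) ∈ closure tri) :
    phi0 (((p : ℝ) + (p' : ℝ)) / ((q : ℝ) + (q' : ℝ)), ((r : ℝ) + (r' : ℝ)) / ((q : ℝ) + (q' : ℝ)))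
        = (((q : ℝ) + (q' : ℝ)) / ((q : ℝ) + (q' : ℝ) + (r : ℝ) + (r' : ℝ)),
           ((p : ℝ) + (p' : ℝ)) / ((q : ℝ) + (q' : ℝ) + (r : ℝ) + (r' : ℝ))) ∧
    phi0 ((p : ℝ) / (q : ℝ), (r : ℝ) / (q : ℝ))
        = ((q : ℝ) / ((q : ℝ) + (r : ℝ)), (p : ℝ) / ((q : ℝ) + (r : ℝ))) ∧
    phi0 ((p' : ℝ) / (q' : ℝ), (r' : ℝ) / (q' : ℝ))
        = ((q' : ℝ) / ((q' : ℝ) + (r' : ℝ)), (p' : ℝ) / ((q' : ℝ) + (r' : ℝ))) ∧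
    phi1 (((p : ℝ) + (p' : ℝ)) / ((q : ℝ) + (q' : ℝ)), ((r : ℝ) + (r' : ℝ)) / ((q : ℝ) + (q' : ℝ)))
        = (((p : ℝ) + (p' : ℝ)) / ((q : ℝ) + (q' : ℝ) + (r : ℝ) + (r' : ℝ)),
           ((r : ℝ) + (r' : ℝ)) / ((q : ℝ) + (q' : ℝ) + (r : ℝ) + (r' : ℝ))) ∧
    phi1 ((p : ℝ) / (q : ℝ), (r : ℝ) / (q : ℝ))
        = ((p : ℝ) / ((q : ℝ) + (r : ℝ)), (r : ℝ) / ((q : ℝ) + (r : ℝ))) ∧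
    phi1 ((p' : ℝ) / (q' : ℝ), (r' : ℝ) / (q' : ℝ))
        = ((p' : ℝ) / ((q' : ℝ) + (r' : ℝ)), (r' : ℝ) / ((q' : ℝ) + (r' : ℝ))) := by
  have hqR : (0:ℝ) < q := by exact_mod_cast hq
  have hqR' : (0:ℝ) < q' := by exact_mod_cast hq'
  have hr : (0:ℝ) ≤ r := by
    have := tri_closure_snd_nonneg h1
    simpa using (div_nonneg_iff.mp this).resolve_right (fun h => absurd h.2 (not_le.mpr hqR)) |>.1
  have hr' : (0:ℝ) ≤ r' := by
    have := tri_closure_snd_nonneg h2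
    simpa using (div_nonneg_iff.mp this).resolve_right (fun h => absurd h.2 (not_le.mpr hqR')) |>.1
  refine ⟨?_, ?_, ?_, ?_, ?_, ?_⟩
  · have := phi0_eq (p + p') (q + q') (r + r') (by linarith) (by linarith)
    rw [this]; ring_nf
  · exact phi0_eq p q r hqR hr
  · exact phi0_eq p' q' r' hqR' hr'
  · have := phi1_eq (p + p') (q + q') (r + r') (by linarith) (by linarith)
    rw [this]; ring_nf
  · exact phi1_eq p q r hqR hr
  · exact phi1_eq p' q' r' hqR' hr'
end

section
/- Let ω ∈ {0,1}ⁿ be a finite binary word, let M_ω be the product of the matrices M₀, M₁ corresponding to the letters of ω, and write M_ω = ((ρ,σ,τ),(ρ₁,σ₁,τ₁),(ρ₂,σ₂,τ₂)) row-wise. Let ξ ∈ [0,1] and (α,β) := φ_ω(ξ,0). Then there exists a constant c > 0, independent of p and q, such that for all integers p and positive integers q with 0 ≤ p ≤ q and |ξq − p| ≤ 1/q, setting s := ρq + σp, m := ρ₁q + σ₁p, n := ρ₂q + σ₂p, one has |α − m/s| ≤ c/(q·s) and |β − n/s| ≤ c/(q·s). -/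
/-- The matrix representing a letter of a binary word: `M₀` for `false`, `M₁` for `true`. -/
def matOf : Bool → Matrix (Fin 3) (Fin 3) ℤ
  | false => !![1, 0, 1; 1, 0, 0; 0, 1, 0]
  | true => !![1, 0, 1; 0, 1, 0; 0, 0, 1]

/-- The matrix M_ω, product of the matrices of the letters of ω. -/
def Mword (ω : List Bool) : Matrix (Fin 3) (Fin 3) ℤ := (ω.map matOf).prod

/-- The map corresponding to a letter: φ₀ for `false`, φ₁ for `true`. -/
noncomputable def phiOf : Bool → (ℝ × ℝ → ℝ × ℝ)
  | false => phi0
  | true => phi1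

/-- The composition φ_ω = φ_{ω₀} ∘ φ_{ω₁} ∘ ⋯ ∘ φ_{ω_{n-1}}. -/
noncomputable def phiWord : List Bool → (ℝ × ℝ → ℝ × ℝ)
  | [] => id
  | b :: t => phiOf b ∘ phiWord t

/-! The matrices `M_b` act on homogeneous coordinates compatibly with `φ_b`, and they preserve
the cone `u₀ > 0, u₁ ≥ 0, u₂ ≥ 0` on which all denominators are positive. Hence
`φ_ω(ξ, 0) = ((ρ₁ + σ₁ξ)/(ρ + σξ), (ρ₂ + σ₂ξ)/(ρ + σξ))`, while `m/s` and `n/s` are the same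
fractions evaluated at `p/q`. The difference of two such fractions is
`(bρ - aσ)(ξq - p) / ((ρ + σξ)(ρq + σp))`, and `|ξq - p| ≤ 1/q` gives the bound with
`c` depending only on `M_ω` and `ξ`. -/

open Matrix

noncomputable def proj (u : Fin 3 → ℝ) : ℝ × ℝ := (u 1 / u 0, u 2 / u 0)

def posCone : Set (Fin 3 → ℝ) := {u | 0 < u 0 ∧ 0 ≤ u 1 ∧ 0 ≤ u 2}

lemma Mword_cons_map (b : Bool) (t : List Bool) :
    (Mword (b :: t)).map (Int.cast : ℤ → ℝ) = (matOf b).map Int.cast * (Mword t).map Int.cast := by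
  rw [show Mword (b :: t) = matOf b * Mword t by simp [Mword]]
  exact Matrix.map_mul (f := Int.castRingHom ℝ)

lemma mulVec_apply_fin_three (A : Matrix (Fin 3) (Fin 3) ℝ) (v : Fin 3 → ℝ) (i : Fin 3) :
    (A *ᵥ v) i = A i 0 * v 0 + A i 1 * v 1 + A i 2 * v 2 := by
  simp [Matrix.mulVec, dotProduct, Fin.sum_univ_three]

lemma matOf_mulVec (b : Bool) (u : Fin 3 → ℝ) :
    (matOf b).map (Int.cast : ℤ → ℝ) *ᵥ u = ![u 0 + u 2, cond b (u 1) (u 0), cond b (u 2) (u 1)] := by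
  ext i; fin_cases i <;> cases b <;> simp [mulVec_apply_fin_three, matOf]

lemma matOf_mulVec_mem_posCone (b : Bool) {u : Fin 3 → ℝ} (hu : u ∈ posCone) :
    (matOf b).map (Int.cast : ℤ → ℝ) *ᵥ u ∈ posCone := by
  obtain ⟨h0, h1, h2⟩ := hu
  rw [matOf_mulVec]
  have h02 : 0 < u 0 + u 2 := by positivity
  cases b
  · exact ⟨by simpa using h02, by simpa using h0.le, by simpa using h1⟩
  · exact ⟨by simpa using h02, by simpa using h1, by simpa using h2⟩

lemma Mword_mulVec_mem_posCone (ω : List Bool) {u : Fin 3 → ℝ} (hu : u ∈ posCone) :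
    (Mword ω).map (Int.cast : ℤ → ℝ) *ᵥ u ∈ posCone := by
  induction ω with
  | nil => simpa [Mword] using hu
  | cons b t ih =>
    rw [Mword_cons_map, ← Matrix.mulVec_mulVec]
    exact matOf_mulVec_mem_posCone b ih

lemma phiOf_proj (b : Bool) {u : Fin 3 → ℝ} (h0 : u 0 ≠ 0) (h02 : u 0 + u 2 ≠ 0) :
    phiOf b (proj u) = proj ((matOf b).map (Int.cast : ℤ → ℝ) *ᵥ u) := by
  rw [matOf_mulVec]
  cases b <;> ext <;>
    simp only [phiOf, phi0, phi1, proj, cond_false, cond_true, cons_val_zero, cons_val_one,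
      cons_val] <;> field_simp

lemma phiWord_proj (ω : List Bool) {u : Fin 3 → ℝ} (hu : u ∈ posCone) :
    phiWord ω (proj u) = proj ((Mword ω).map (Int.cast : ℤ → ℝ) *ᵥ u) := by
  induction ω with
  | nil => simp [phiWord, Mword]
  | cons b t ih =>
    obtain ⟨h0, -, h2⟩ := Mword_mulVec_mem_posCone t hu
    rw [phiWord, Function.comp_apply, ih, phiOf_proj b h0.ne' (by positivity), Mword_cons_map,
      Matrix.mulVec_mulVec]

lemma div_sub_div_linear (a b ρ σ x p q : ℝ) (hA : ρ + σ * x ≠ 0) (hs : ρ * q + σ * p ≠ 0) :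
    (a + b * x) / (ρ + σ * x) - (a * q + b * p) / (ρ * q + σ * p)
      = (b * ρ - a * σ) * (x * q - p) / ((ρ + σ * x) * (ρ * q + σ * p)) := by
  rw [div_sub_div _ _ hA hs]
  congr 1
  ring

lemma abs_div_sub_div_linear_le (a b ρ σ x p q : ℝ) (hA : 0 < ρ + σ * x) (hs : 0 < ρ * q + σ * p)
    (hq : 0 < q) (hx : |x * q - p| ≤ 1 / q) :
    |(a + b * x) / (ρ + σ * x) - (a * q + b * p) / (ρ * q + σ * p)|
      ≤ |b * ρ - a * σ| / (ρ + σ * x) / (q * (ρ * q + σ * p)) := by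
  rw [div_sub_div_linear a b ρ σ x p q hA.ne' hs.ne', abs_div, abs_mul,
    abs_of_pos (mul_pos hA hs)]
  calc |b * ρ - a * σ| * |x * q - p| / ((ρ + σ * x) * (ρ * q + σ * p))
      ≤ |b * ρ - a * σ| * (1 / q) / ((ρ + σ * x) * (ρ * q + σ * p)) := by gcongr
    _ = |b * ρ - a * σ| / (ρ + σ * x) / (q * (ρ * q + σ * p)) := by field_simp

/-- for ω a binary word with matrix M_ω = ((ρ,σ,τ),(ρ₁,σ₁,τ₁),(ρ₂,σ₂,τ₂)),
ξ ∈ [0,1] and (α,β) = φ_ω(ξ,0), there is c > 0 independent of p,q such that whenever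
0 ≤ p ≤ q, q > 0 and |ξq - p| ≤ 1/q, setting s = ρq+σp, m = ρ₁q+σ₁p, n = ρ₂q+σ₂p,
one has |α - m/s| ≤ c/(qs) and |β - n/s| ≤ c/(qs). -/
theorem approx_bound (ω : List Bool) (ξ : ℝ) (hξ : ξ ∈ Set.Icc (0 : ℝ) 1) :
    ∃ c > 0, ∀ p q : ℤ, 0 < q → 0 ≤ p → p ≤ q → |ξ * (q : ℝ) - (p : ℝ)| ≤ 1 / (q : ℝ) →
      |(phiWord ω (ξ, 0)).1 -
          ((Mword ω 1 0 * q + Mword ω 1 1 * p : ℤ) : ℝ) /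
            ((Mword ω 0 0 * q + Mword ω 0 1 * p : ℤ) : ℝ)|
        ≤ c / ((q : ℝ) * ((Mword ω 0 0 * q + Mword ω 0 1 * p : ℤ) : ℝ)) ∧
      |(phiWord ω (ξ, 0)).2 -
          ((Mword ω 2 0 * q + Mword ω 2 1 * p : ℤ) : ℝ) /
            ((Mword ω 0 0 * q + Mword ω 0 1 * p : ℤ) : ℝ)|
        ≤ c / ((q : ℝ) * ((Mword ω 0 0 * q + Mword ω 0 1 * p : ℤ) : ℝ)) := by
  set M := (Mword ω).map (Int.cast : ℤ → ℝ)
  have hξ0 : ![1, ξ, 0] ∈ posCone := ⟨by simp, by simpa using hξ.1, by simp⟩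
  have hφ : phiWord ω (ξ, 0) = proj (M *ᵥ ![1, ξ, 0]) := by
    simpa [proj] using phiWord_proj ω hξ0
  have hA : 0 < (M *ᵥ ![1, ξ, 0]) 0 := (Mword_mulVec_mem_posCone ω hξ0).1
  simp only [M, proj, mulVec_apply_fin_three, map_apply, cons_val_zero, cons_val_one, cons_val,
    mul_one, mul_zero, add_zero] at hφ hA
  set A := (Mword ω 0 0 : ℝ) + Mword ω 0 1 * ξ
  set D₁ := |(Mword ω 1 1 : ℝ) * Mword ω 0 0 - Mword ω 1 0 * Mword ω 0 1|
  set D₂ := |(Mword ω 2 1 : ℝ) * Mword ω 0 0 - Mword ω 2 0 * Mword ω 0 1|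
  have hD : 0 ≤ D₁ ∧ 0 ≤ D₂ := ⟨abs_nonneg _, abs_nonneg _⟩
  refine ⟨(D₁ + D₂ + 1) / A, by positivity, fun p q hq hp _ hpq => ?_⟩
  have hq' : (0 : ℝ) < q := by exact_mod_cast hq
  have hs : 0 < (M *ᵥ ![(q : ℝ), p, 0]) 0 :=
    (Mword_mulVec_mem_posCone ω ⟨by simpa using hq', by simpa using hp, by simp⟩).1
  simp only [M, mulVec_apply_fin_three, map_apply, cons_val_zero, cons_val_one, cons_val,
    mul_zero, add_zero] at hs
  have hqs : 0 ≤ (q : ℝ) * (Mword ω 0 0 * q + Mword ω 0 1 * p) := (mul_pos hq' hs).le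
  rw [hφ]
  push_cast
  constructor
  · refine (abs_div_sub_div_linear_le _ _ _ _ _ _ _ hA hs hq' hpq).trans ?_
    exact div_le_div_of_nonneg_right (div_le_div_of_nonneg_right (by linarith) hA.le) hqs
  · refine (abs_div_sub_div_linear_le _ _ _ _ _ _ _ hA hs hq' hpq).trans ?_
    exact div_le_div_of_nonneg_right (div_le_div_of_nonneg_right (by linarith) hA.le) hqs
end

section
/- Let d ≥ 0 be an integer and let α ∈ (0,1) satisfy α³ + dα² + α − 1 = 0. Then (α, α²) ∈ △_d and T(α, α²) = (α, α²); consequently the triangle sequence of (α, α²) is the constant sequence [d,d,d,…]. -/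
/-- for an integer d ≥ 0 and α ∈ (0,1) with α³ + dα² + α - 1 = 0, the
point (α, α²) lies in △_d and is fixed by T; consequently its triangle sequence is the
constant sequence [d,d,d,…], i.e. T^j(α,α²) ∈ △_d for every j. -/
theorem fixed_point_triangle_seq (d : ℕ) (α : ℝ) (hα : α ∈ Set.Ioo (0 : ℝ) 1)
    (hroot : α ^ 3 + (d : ℝ) * α ^ 2 + α - 1 = 0) :
    (α, α ^ 2) ∈ triK d ∧ Tmap (α, α ^ 2) = (α, α ^ 2) ∧
      ∀ j : ℕ, Tmap^[j] (α, α ^ 2) ∈ triK d := by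
  obtain ⟨h0, h1⟩ := hα
  have hsq : (0:ℝ) < α ^ 2 := by positivity
  have hkey : 1 - α - (d : ℝ) * α ^ 2 = α ^ 3 := by linarith
  have hmem : (α, α ^ 2) ∈ triK d := by
    refine ⟨⟨h1.le, ?_, hsq⟩, ?_, ?_⟩ <;> dsimp only
    · nlinarith
    · nlinarith [pow_pos h0 3]
    · nlinarith [mul_pos hsq (sub_pos.mpr h1)]
  have hfloor : ⌊(1 - α) / α ^ 2⌋ = (d : ℤ) := by
    have hdiv : (1 - α) / α ^ 2 = (d : ℝ) + α := by
      field_simp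
      nlinarith
    rw [hdiv, Int.floor_eq_iff]
    push_cast
    constructor <;> linarith
  have hfix : Tmap (α, α ^ 2) = (α, α ^ 2) := by
    simp only [Tmap, hfloor]
    have hne : α ≠ 0 := ne_of_gt h0
    refine Prod.ext ?_ ?_
    · simp only
      field_simp
    · simp only
      push_cast
      rw [hkey]
      field_simp
  refine ⟨hmem, hfix, fun j => ?_⟩
  induction j with
  | zero => simpa using hmem
  | succ n ih =>
    rw [Function.iterate_succ_apply', Function.IsFixedPt.iterate hfix n, hfix]
    exact hmem
end

section
/- Let d ≥ 3 be an integer, α ∈ (0,1) the unique root of t³ + dt² + t − 1, and β = α². For k ≥ 1 define the rational pair (m_k/s_k, n_k/s_k) by ((s_k),(m_k),(n_k))ᵀ = M_d^k (2,1,0)ᵀ with M_d := ((1,d,1),(1,0,0),(0,1,0)). Let λ₁ < λ₂ < λ₃ be the three real roots of λ³ − λ² − dλ − 1. Then lim_{k→∞} s_k^η |α − m_k/s_k| · |β − n_k/s_k| = 0 for every η < 2(1 − log|λ₁|/log λ₃) if d ≥ 4, and for every η < 4 if d = 3. -/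
open Filter Topology

/-- The matrix M_d = ((1,d,1),(1,0,0),(0,1,0)) over ℤ. -/
def Md (d : ℕ) : Matrix (Fin 3) (Fin 3) ℤ := !![1, (d : ℤ), 1; 1, 0, 0; 0, 1, 0]

/-- The vector (s_k, m_k, n_k)ᵀ = M_d^k (2,1,0)ᵀ. -/
def approxVec (d k : ℕ) : Fin 3 → ℤ := (Md d ^ k).mulVec ![2, 1, 0]

set_option maxHeartbeats 4000000 in
/-- let d ≥ 3, α ∈ (0,1) the root of t³ + dt² + t - 1, β = α², and
(s_k, m_k, n_k)ᵀ = M_d^k (2,1,0)ᵀ.  If λ₁ < λ₂ < λ₃ are the three real roots of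
λ³ - λ² - dλ - 1, then s_k^η |α - m_k/s_k| |β - n_k/s_k| → 0 for every
η < 2(1 - log|λ₁|/log λ₃) if d ≥ 4, and for every η < 4 if d = 3. -/
theorem approx_speed (d : ℕ) (hd : 3 ≤ d) (α : ℝ) (hα : α ∈ Set.Ioo (0 : ℝ) 1)
    (hroot : α ^ 3 + (d : ℝ) * α ^ 2 + α - 1 = 0) (β : ℝ) (hβ : β = α ^ 2)
    (l1 l2 l3 : ℝ) (h12 : l1 < l2) (h23 : l2 < l3)
    (hl1 : l1 ^ 3 - l1 ^ 2 - (d : ℝ) * l1 - 1 = 0)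
    (hl2 : l2 ^ 3 - l2 ^ 2 - (d : ℝ) * l2 - 1 = 0)
    (hl3 : l3 ^ 3 - l3 ^ 2 - (d : ℝ) * l3 - 1 = 0)
    (η : ℝ)
    (hη : (4 ≤ d ∧ η < 2 * (1 - Real.log |l1| / Real.log l3)) ∨ (d = 3 ∧ η < 4)) :
    Tendsto (fun k : ℕ =>
        ((approxVec d k 0 : ℝ) ^ η) *
          |α - (approxVec d k 1 : ℝ) / (approxVec d k 0 : ℝ)| *
          |β - (approxVec d k 2 : ℝ) / (approxVec d k 0 : ℝ)|)
      atTop (𝓝 0) := by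
  subst hβ
  have hα0 : 0 < α := hα.1
  have hα1 : α < 1 := hα.2
  have hαne : α ≠ 0 := ne_of_gt hα0
  have h12' : l1 - l2 ≠ 0 := sub_ne_zero.mpr (ne_of_lt h12)
  have h23' : l2 - l3 ≠ 0 := sub_ne_zero.mpr (ne_of_lt h23)
  have h13' : l1 - l3 ≠ 0 := sub_ne_zero.mpr (ne_of_lt (h12.trans h23))
  -- ### symmetric functions of the roots
  have q12 : l1^2 + l1*l2 + l2^2 - (l1 + l2) - d = 0 := by
    have h : (l1 - l2) * (l1^2 + l1*l2 + l2^2 - (l1 + l2) - d) = 0 := by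
      linear_combination hl1 - hl2
    rcases mul_eq_zero.mp h with h | h
    · exact absurd h h12'
    · exact h
  have q13 : l1^2 + l1*l3 + l3^2 - (l1 + l3) - d = 0 := by
    have h : (l1 - l3) * (l1^2 + l1*l3 + l3^2 - (l1 + l3) - d) = 0 := by
      linear_combination hl1 - hl3
    rcases mul_eq_zero.mp h with h | h
    · exact absurd h h13'
    · exact h
  have hs1 : l1 + l2 + l3 = 1 := by
    have h : (l2 - l3) * (l1 + l2 + l3 - 1) = 0 := by linear_combination q12 - q13
    rcases mul_eq_zero.mp h with h | h
    · exact absurd h h23'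
    · linarith [sub_eq_zero.mp h]
  have hs2 : l1*l2 + l1*l3 + l2*l3 = -(d:ℝ) := by
    linear_combination (l1+l2)*hs1 - q12
  have hs3 : l1*l2*l3 = 1 := by
    have hl1l2 : l1*l2 = l3^2 - l3 - d := by
      linear_combination (l1 + l2 - l3) * hs1 - q12
    linear_combination l3 * hl1l2 + hl3
  have hfact : ∀ x : ℝ, (x - l1)*(x - l2)*(x - l3) = x^3 - x^2 - d*x - 1 := by
    intro x
    linear_combination (-(x^2))*hs1 + x*hs2 - hs3
  -- ### ordering facts about the roots
  have hl3gt1 : 1 < l3 := by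
    by_contra h
    push_neg at h
    have h1 : (1 - l1)*(1 - l2)*(1 - l3) = -(d:ℝ) - 1 := by
      have := hfact 1; linarith [hfact 1]
    nlinarith [sub_nonneg.mpr h, sub_nonneg.mpr (h23.le.trans h), sub_nonneg.mpr ((h12.trans h23).le.trans h)]
  have hl3pos : 0 < l3 := by linarith
  have hl2neg : l2 < 0 := by
    by_contra h
    push_neg at h
    have hl1n : l1 < 0 := by linarith
    nlinarith [mul_nonneg h hl3pos.le]
  have hl1neg : l1 < 0 := h12.trans hl2neg
  have hαl3 : α * l3 = 1 := by
    have hinv : ((1/α) - l1)*((1/α) - l2)*((1/α) - l3) = 0 := by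
      rw [hfact]
      have h : (1/α)^3 - (1/α)^2 - (d:ℝ)*(1/α) - 1 = -(α^3 + d*α^2 + α - 1)/α^3 := by
        field_simp; ring
      rw [h, hroot]; simp
    have hia : 0 < 1/α := by positivity
    have h1 : (1/α) - l1 ≠ 0 := by intro h; nlinarith
    have h2 : (1/α) - l2 ≠ 0 := by intro h; nlinarith
    have h3 : (1/α) - l3 = 0 := by
      rcases mul_eq_zero.mp hinv with h | h
      · rcases mul_eq_zero.mp h with h | h
        · exact absurd h h1
        · exact absurd h h2
      · exact h
    have h4 : 1/α = l3 := by linarith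
    field_simp at h4
    linarith [h4]
  have hprodα : l1 * l2 = α := by
    have h : (l1*l2 - α) * l3 = 0 := by linear_combination hs3 - hαl3
    rcases mul_eq_zero.mp h with h | h
    · linarith [sub_eq_zero.mp h]
    · exact absurd h (ne_of_gt hl3pos)
  have hsum : α*(l1+l2) = α - 1 := by
    linear_combination α*hs1 - hαl3
  have hq1 : α*l1^2 = (α - 1)*l1 - α^2 := by
    linear_combination l1 * hsum - α * hprodα
  have hq2 : α*l2^2 = (α - 1)*l2 - α^2 := by
    linear_combination l2 * hsum - α * hprodα
  -- ### the integer sequences and their recurrences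
  set S : ℕ → ℝ := fun k => ((approxVec d k 0 : ℤ) : ℝ) with hSdef
  set M : ℕ → ℝ := fun k => ((approxVec d k 1 : ℤ) : ℝ) with hMdef
  set N : ℕ → ℝ := fun k => ((approxVec d k 2 : ℤ) : ℝ) with hNdef
  have hvsucc : ∀ k, approxVec d (k+1) = (Md d).mulVec (approxVec d k) := by
    intro k; simp [approxVec, pow_succ']
  have hS : ∀ k, S (k+1) = S k + d * M k + N k := by
    intro k
    have h : approxVec d (k+1) 0 = approxVec d k 0 + d * approxVec d k 1 + approxVec d k 2 := by
      rw [hvsucc]; simp [Md, Matrix.mulVec, dotProduct, Fin.sum_univ_three]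
    simp only [hSdef, hMdef, hNdef, h]; push_cast; ring
  have hM : ∀ k, M (k+1) = S k := by
    intro k
    have h : approxVec d (k+1) 1 = approxVec d k 0 := by
      rw [hvsucc]; simp [Md, Matrix.mulVec, dotProduct, Fin.sum_univ_three]
    simp only [hSdef, hMdef, h]
  have hN : ∀ k, N (k+1) = M k := by
    intro k
    have h : approxVec d (k+1) 2 = approxVec d k 1 := by
      rw [hvsucc]; simp [Md, Matrix.mulVec, dotProduct, Fin.sum_univ_three]
    simp only [hNdef, hMdef, h]
  have hS0 : S 0 = 2 := by simp [hSdef, approxVec]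
  have hM0 : M 0 = 1 := by simp [hMdef, approxVec]
  have hN0 : N 0 = 0 := by simp [hNdef, approxVec]
  have hS1 : S 1 = (d:ℝ) + 2 := by rw [hS 0, hS0, hM0, hN0]; ring
  have hM1 : M 1 = 2 := by rw [hM 0, hS0]
  have hN1 : N 1 = 1 := by rw [hN 0, hM0]
  -- positivity of the sequences
  have hpos : ∀ k, 1 ≤ S k ∧ 0 ≤ M k ∧ 0 ≤ N k := by
    intro k
    induction k with
    | zero => rw [hS0, hM0, hN0]; norm_num
    | succ n ih =>
      obtain ⟨h1, h2, h3⟩ := ih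
      refine ⟨?_, ?_, ?_⟩
      · rw [hS n]
        have : 0 ≤ (d:ℝ) * M n := mul_nonneg (by positivity) h2
        linarith
      · rw [hM n]; linarith
      · rw [hN n]; exact h2
  -- ### the error sequences
  set E : ℕ → ℝ := fun k => α * S k - M k with hEdef
  set F : ℕ → ℝ := fun k => α^2 * S k - N k with hFdef
  have hErec : ∀ k, α * E (k+1+1) = (α - 1) * E (k+1) - α^2 * E k := by
    intro k
    simp only [hEdef, hS, hM, hN]
    linear_combination (S k) * hroot
  have hFrec : ∀ k, α * F (k+1+1) = (α - 1) * F (k+1) - α^2 * F k := by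
    intro k
    simp only [hFdef, hS, hM, hN]
    linear_combination (α * S k + M k) * hroot
  have hS' : ∀ k, S (k+1) = l3 * S k - (d * E k + F k) := by
    intro k
    rw [hS k]
    simp only [hEdef, hFdef]
    linear_combination (S k * l3) * hroot - S k * (α^2 + (d:ℝ)*α + 1) * hαl3
  -- ### closed forms for the error sequences
  set A1 : ℝ := (E 1 - l2 * E 0)/(l1 - l2) with hA1def
  set A2 : ℝ := (l1 * E 0 - E 1)/(l1 - l2) with hA2def
  set B1 : ℝ := (F 1 - l2 * F 0)/(l1 - l2) with hB1def
  set B2 : ℝ := (l1 * F 0 - F 1)/(l1 - l2) with hB2def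
  have hEcf2 : ∀ k, E k = A1*l1^k + A2*l2^k ∧ E (k+1) = A1*l1^(k+1) + A2*l2^(k+1) := by
    intro k
    induction k with
    | zero =>
      constructor
      · simp only [pow_zero, pow_one, hA1def, hA2def]
        field_simp
        try ring
      · simp only [pow_zero, pow_one, hA1def, hA2def]
        field_simp
        try ring
    | succ n ih =>
      refine ⟨ih.2, ?_⟩
      have hgoal : α * E (n+1+1) = α * (A1*l1^(n+1+1) + A2*l2^(n+1+1)) := by
        rw [hErec n]
        linear_combination (α - 1)*ih.2 - α^2*ih.1 - (A1*l1^n)*hq1 - (A2*l2^n)*hq2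
      exact mul_left_cancel₀ hαne hgoal
  have hFcf2 : ∀ k, F k = B1*l1^k + B2*l2^k ∧ F (k+1) = B1*l1^(k+1) + B2*l2^(k+1) := by
    intro k
    induction k with
    | zero =>
      constructor
      · simp only [pow_zero, pow_one, hB1def, hB2def]
        field_simp
        try ring
      · simp only [pow_zero, pow_one, hB1def, hB2def]
        field_simp
        try ring
    | succ n ih =>
      refine ⟨ih.2, ?_⟩
      have hgoal : α * F (n+1+1) = α * (B1*l1^(n+1+1) + B2*l2^(n+1+1)) := by
        rw [hFrec n]
        linear_combination (α - 1)*ih.2 - α^2*ih.1 - (B1*l1^n)*hq1 - (B2*l2^n)*hq2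
      exact mul_left_cancel₀ hαne hgoal
  have hEcf : ∀ k, E k = A1*l1^k + A2*l2^k := fun k => (hEcf2 k).1
  have hFcf : ∀ k, F k = B1*l1^k + B2*l2^k := fun k => (hFcf2 k).1
  -- ### closed form for S
  have h31' : l3 - l1 ≠ 0 := sub_ne_zero.mpr (h12.trans h23).ne'
  have h32' : l3 - l2 ≠ 0 := sub_ne_zero.mpr h23.ne'
  set a : ℝ := ((d:ℝ) * A1 + B1)/(l3 - l1) with hadef
  set b : ℝ := ((d:ℝ) * A2 + B2)/(l3 - l2) with hbdef
  set D : ℝ := 2 - a - b with hDdef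
  have ha : a * (l3 - l1) = (d:ℝ) * A1 + B1 := by
    rw [hadef]; field_simp
  have hb : b * (l3 - l2) = (d:ℝ) * A2 + B2 := by
    rw [hbdef]; field_simp
  have hScf : ∀ k, S k = D*l3^k + a*l1^k + b*l2^k := by
    intro k
    induction k with
    | zero => rw [hS0]; simp only [pow_zero, hDdef]; ring
    | succ n ih =>
      rw [hS' n, ih, hEcf n, hFcf n]
      linear_combination (l1^n) * ha + (l2^n) * hb
  -- ### growth facts
  set μ : ℝ := Real.sqrt d with hμdef
  have hμsq : μ^2 = (d:ℝ) := Real.sq_sqrt (Nat.cast_nonneg d)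
  have hμ0 : 0 ≤ μ := Real.sqrt_nonneg _
  have hμμ : μ * μ = (d:ℝ) := by rw [← pow_two]; exact hμsq
  have hμ1 : 1 ≤ μ := by
    rw [hμdef, show (1:ℝ) = Real.sqrt 1 from Real.sqrt_one.symm]
    apply Real.sqrt_le_sqrt
    have : (3:ℝ) ≤ (d:ℝ) := by exact_mod_cast hd
    linarith
  have hgrow : ∀ k, μ^k ≤ S k ∧ μ^(k+1) ≤ S (k+1) := by
    intro k
    induction k with
    | zero =>
      constructor
      · rw [hS0]; norm_num
      · rw [hS1, pow_one]
        have h := mul_le_mul_of_nonneg_left hμ1 hμ0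
        rw [mul_one] at h
        linarith [hμμ]
    | succ n ih =>
      refine ⟨ih.2, ?_⟩
      have e : S (n+1+1) = S (n+1) + d * S n + M n := by
        rw [hS (n+1), hM n, hN n]
      have e2 : μ^(n+1+1) = (d:ℝ) * μ^n := by
        rw [pow_succ, pow_succ, mul_assoc, hμμ]
        ring
      have h1 : (d:ℝ) * μ^n ≤ (d:ℝ) * S n :=
        mul_le_mul_of_nonneg_left (ih.1) (by positivity)
      have h2 := (hpos n).2.1
      have h3 := ih.2
      have h4 : (0:ℝ) < μ^(n+1) := by positivity
      rw [e, e2]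
      linarith
  have hl1sqlt : l1^2 < (d:ℝ) := by
    have key : (-l1)*((d:ℝ) - l1^2) = l1^2 + 1 := by linear_combination hl1
    have h4 : 0 < (-l1)*((d:ℝ) - l1^2) := by rw [key]; positivity
    rcases mul_pos_iff.mp h4 with ⟨_, h⟩ | ⟨h, _⟩
    · linarith
    · linarith
  set r0 : ℝ := -l1 with hr0def
  have hr0pos : 0 < r0 := by simp only [hr0def]; linarith
  have hr0μ : r0 < μ := by
    by_contra h
    push_neg at h
    have h2 : μ * μ ≤ r0 * r0 := mul_le_mul h h hμ0 (hμ0.trans h)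
    have h3 : r0 * r0 = l1^2 := by rw [hr0def]; ring
    linarith [hμμ, hl1sqlt]
  have hr0l3 : r0 < l3 := by simp only [hr0def]; linarith [hs1, hl2neg]
  have habs1 : |l1| = r0 := abs_of_neg hl1neg
  have habs2 : |l2| ≤ r0 := by rw [abs_of_neg hl2neg]; simp only [hr0def]; linarith
  have hbound : ∀ (c e : ℝ) (k : ℕ), |c*l1^k + e*l2^k| ≤ (|c|+|e|)*r0^k := by
    intro c e k
    calc |c*l1^k + e*l2^k| ≤ |c*l1^k| + |e*l2^k| := abs_add_le _ _
      _ = |c| * |l1|^k + |e| * |l2|^k := by rw [abs_mul, abs_mul, abs_pow, abs_pow]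
      _ ≤ |c| * r0^k + |e| * r0^k := by
          have p1 : |l1|^k ≤ r0^k := by rw [habs1]
          have p2 : |l2|^k ≤ r0^k := pow_le_pow_left₀ (abs_nonneg _) habs2 k
          have q1 := mul_le_mul_of_nonneg_left p1 (abs_nonneg c)
          have q2 := mul_le_mul_of_nonneg_left p2 (abs_nonneg e)
          linarith
      _ = (|c|+|e|) * r0^k := by ring
  -- D > 0
  have hD : 0 < D := by
    by_contra hDn
    push_neg at hDn
    have hub' : ∀ k, S k ≤ (|a|+|b|)*r0^k := by
      intro k
      have h1 : a*l1^k + b*l2^k ≤ (|a|+|b|)*r0^k :=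
        le_trans (le_abs_self _) (hbound a b k)
      have h2 : D*l3^k ≤ 0 := mul_nonpos_of_nonpos_of_nonneg hDn (by positivity)
      rw [hScf k]; linarith
    have hcon : ∀ k : ℕ, (μ/r0)^k ≤ |a|+|b| := by
      intro k
      rw [div_pow, div_le_iff₀ (by positivity)]
      exact le_trans (hgrow k).1 (hub' k)
    obtain ⟨k, hk⟩ :=
      ((tendsto_pow_atTop_atTop_of_one_lt ((one_lt_div hr0pos).mpr hr0μ)).eventually_gt_atTop
        (|a|+|b|)).exists
    exact absurd (hcon k) (not_le.mpr hk)
  -- ### choice of the decay rate r, by cases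
  obtain ⟨r, hrpos, hEb, hFb, hlogneg⟩ :
      ∃ r : ℝ, 0 < r ∧ (∀ k, |E k| ≤ (|A1|+|A2|)*r^k) ∧ (∀ k, |F k| ≤ (|B1|+|B2|)*r^k) ∧
        (η-2)*Real.log l3 + 2*Real.log r < 0 := by
    have hlogl3 : 0 < Real.log l3 := Real.log_pos hl3gt1
    rcases hη with ⟨hd4, hηlt⟩ | ⟨hd3, hηlt⟩
    · refine ⟨r0, hr0pos, ?_, ?_, ?_⟩
      · intro k; rw [hEcf k]; exact hbound A1 A2 k
      · intro k; rw [hFcf k]; exact hbound B1 B2 k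
      · rw [habs1] at hηlt
        have h1 : η - 2 < (-2*Real.log r0)/Real.log l3 := by
          have : 2 * (1 - Real.log r0 / Real.log l3) = 2 - 2*Real.log r0/Real.log l3 := by ring
          rw [this] at hηlt
          have : 2*Real.log r0/Real.log l3 = -((-2*Real.log r0)/Real.log l3) := by ring
          linarith [hηlt, this]
        have h2 : (η-2)*Real.log l3 < -2*Real.log r0 := (lt_div_iff₀ hlogl3).mp h1
        linarith
    · -- d = 3 : here l1 = -1 and l2 = -α
      have hd3' : (d:ℝ) = 3 := by rw [hd3]; norm_num
      have hroot3 : α^3 + 3*α^2 + α - 1 = 0 := by rw [hd3'] at hroot; linarith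
      have hquad : α^2 + 2*α - 1 = 0 := by
        have h : (α + 1)*(α^2 + 2*α - 1) = 0 := by linear_combination hroot3
        rcases mul_eq_zero.mp h with h | h
        · linarith
        · exact h
      have hl1m1 : l1 = -1 := by
        have hm1 : (-1 - l1)*(-1 - l2)*(-1 - l3) = 0 := by
          have := hfact (-1)
          rw [hd3'] at this
          linarith [this]
        have h3 : -1 - l3 ≠ 0 := by intro h; linarith
        have h12or : (-1 - l1)*(-1 - l2) = 0 := by
          rcases mul_eq_zero.mp hm1 with h | h
          · exact h
          · exact absurd h h3
        rcases mul_eq_zero.mp h12or with h | h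
        · linarith
        · -- l2 = -1, then l1 < -1, contradiction with hl1
          exfalso
          have hl2m1 : l2 = -1 := by linarith
          have hl1lt : l1 < -1 := by rw [hl2m1] at h12; exact h12
          have hq : (l1 + 1)*(l1^2 - 2*l1 - 1) = 0 := by
            rw [hd3'] at hl1; linear_combination hl1
          rcases mul_eq_zero.mp hq with h' | h'
          · linarith
          · linarith [sq_nonneg (l1+1)]
      have hl2α : l2 = -α := by
        rw [hl1m1] at hprodα; linarith
      have hA1z : A1 = 0 := by
        have hnum : E 1 - l2 * E 0 = 0 := by
          simp only [hEdef]
          rw [hS1, hM1, hS0, hM0, hl2α, hd3']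
          linear_combination 2*hquad
        rw [hA1def, hnum, zero_div]
      have hB1z : B1 = 0 := by
        have hnum : F 1 - l2 * F 0 = 0 := by
          simp only [hFdef]
          rw [hS1, hN1, hS0, hN0, hl2α, hd3']
          linear_combination 2*hroot3 - hquad
        rw [hB1def, hnum, zero_div]
      have hl2a : |l2| = α := by rw [hl2α, abs_neg, abs_of_pos hα0]
      refine ⟨α, hα0, ?_, ?_, ?_⟩
      · intro k
        rw [hEcf k, hA1z]
        simp only [zero_mul, zero_add, abs_zero]
        rw [abs_mul, abs_pow, hl2a]
      · intro k
        rw [hFcf k, hB1z]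
        simp only [zero_mul, zero_add, abs_zero]
        rw [abs_mul, abs_pow, hl2a]
      · have hlogα : Real.log α = -Real.log l3 := by
          have h := Real.log_mul hαne (ne_of_gt hl3pos)
          rw [hαl3, Real.log_one] at h
          linarith
        rw [hlogα]
        have : (η-2)*Real.log l3 + 2*(-Real.log l3) = (η-4)*Real.log l3 := by ring
        rw [this]
        apply mul_neg_of_neg_of_pos _ hlogl3
        linarith
  -- ### assembling the limit
  set CE : ℝ := |A1| + |A2| with hCEdef
  set CF : ℝ := |B1| + |B2| with hCFdef
  set c2 : ℝ := D + |a| + |b| with hc2def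
  have hc2pos : 0 < c2 := by
    simp only [hc2def]
    have := abs_nonneg a
    have := abs_nonneg b
    linarith
  set ρ : ℝ := l3 ^ (η - 2) * r^2 with hρdef
  have hρpos : 0 < ρ := by
    have := Real.rpow_pos_of_pos hl3pos (η - 2)
    positivity
  have hρlt1 : ρ < 1 := by
    have hlogρ : Real.log ρ = (η-2)*Real.log l3 + 2*Real.log r := by
      rw [hρdef, Real.log_mul (ne_of_gt (Real.rpow_pos_of_pos hl3pos _)) (by positivity),
        Real.log_rpow hl3pos, Real.log_pow]
      push_cast; ring
    have h := Real.exp_lt_exp.mpr (hlogρ ▸ hlogneg)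
    rwa [Real.exp_log hρpos, Real.exp_zero] at h
  -- upper bound on S
  have hub : ∀ k, S k ≤ c2 * l3^k := by
    intro k
    have h1 : a*l1^k + b*l2^k ≤ (|a|+|b|)*r0^k := le_trans (le_abs_self _) (hbound a b k)
    have h2 : r0^k ≤ l3^k := pow_le_pow_left₀ hr0pos.le hr0l3.le k
    have h3 : (|a|+|b|)*r0^k ≤ (|a|+|b|)*l3^k :=
      mul_le_mul_of_nonneg_left h2 (by positivity)
    rw [hScf k]
    simp only [hc2def]
    linarith [h1, h3]
  -- eventual lower bound on S
  have hlbEv : ∀ᶠ k in atTop, D/2 * l3^k ≤ S k := by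
    have htend : Tendsto (fun k : ℕ => (|a|+|b|)*(r0/l3)^k) atTop (𝓝 0) := by
      have h := tendsto_pow_atTop_nhds_zero_of_lt_one
        (by positivity : (0:ℝ) ≤ r0/l3) ((div_lt_one hl3pos).mpr hr0l3)
      simpa using h.const_mul (|a|+|b|)
    filter_upwards [htend.eventually (gt_mem_nhds (by positivity : (0:ℝ) < D/2))] with k hk
    have h1 : |a*l1^k + b*l2^k| ≤ (|a|+|b|)*r0^k := hbound a b k
    have h2 : (|a|+|b|)*r0^k < D/2 * l3^k := by
      have e : (|a|+|b|)*(r0/l3)^k * l3^k = (|a|+|b|)*r0^k := by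
        rw [div_pow]; field_simp
      calc (|a|+|b|)*r0^k = (|a|+|b|)*(r0/l3)^k * l3^k := e.symm
        _ < D/2 * l3^k := by
            apply mul_lt_mul_of_pos_right hk (by positivity)
    have h3 : -(D/2 * l3^k) < a*l1^k + b*l2^k := by
      have h4 := abs_lt.mp (lt_of_le_of_lt h1 h2)
      linarith [h4.1]
    rw [hScf k]
    linarith [h3]
  set K : ℝ := max ((D/2) ^ (η-2)) (c2 ^ (η-2)) with hKdef
  have hKpos : 0 < K := lt_of_lt_of_le (Real.rpow_pos_of_pos (by positivity) (η-2)) (le_max_left _ _)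
  -- the squeeze
  have hupper : ∀ᶠ k in atTop,
      S k ^ η * |α - M k / S k| * |α^2 - N k / S k| ≤ (K*CE*CF) * ρ^k := by
    filter_upwards [hlbEv] with k hk
    have hSk1 : 1 ≤ S k := (hpos k).1
    have hSkpos : 0 < S k := by linarith
    have e1 : α - M k / S k = E k / S k := by
      simp only [hEdef]; field_simp
    have e2 : α^2 - N k / S k = F k / S k := by
      simp only [hFdef]; field_simp
    have hrw : S k ^ η * |α - M k / S k| * |α^2 - N k / S k|
        = S k ^ (η-2) * |E k| * |F k| := by
      rw [e1, e2, abs_div, abs_div, abs_of_pos hSkpos]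
      have hη2 : S k ^ η = S k ^ (η-2) * (S k * S k) := by
        have h5 : S k ^ (η-2) * S k ^ (2:ℝ) = S k ^ η := by
          rw [← Real.rpow_add hSkpos]; norm_num
        rw [← h5, Real.rpow_two, pow_two]
      rw [hη2]
      field_simp
    rw [hrw]
    -- bound S k ^ (η - 2)
    have hSb : S k ^ (η-2) ≤ K * (l3^k) ^ (η-2) := by
      rcases le_total 2 η with hcase | hcase
      · have h1 : S k ^ (η-2) ≤ (c2 * l3^k) ^ (η-2) :=
          Real.rpow_le_rpow hSkpos.le (hub k) (by linarith)
        have h2 : (c2 * l3^k) ^ (η-2) = c2 ^ (η-2) * (l3^k) ^ (η-2) :=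
          Real.mul_rpow hc2pos.le (by positivity)
        calc S k ^ (η-2) ≤ c2 ^ (η-2) * (l3^k) ^ (η-2) := by rw [← h2]; exact h1
          _ ≤ K * (l3^k) ^ (η-2) := by
              apply mul_le_mul_of_nonneg_right (le_max_right _ _)
                (Real.rpow_nonneg (by positivity) _)
      · have h1 : S k ^ (η-2) ≤ (D/2 * l3^k) ^ (η-2) :=
          Real.rpow_le_rpow_of_nonpos (by positivity) hk (by linarith)
        have h2 : (D/2 * l3^k) ^ (η-2) = (D/2) ^ (η-2) * (l3^k) ^ (η-2) :=
          Real.mul_rpow (by positivity) (by positivity)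
        calc S k ^ (η-2) ≤ (D/2) ^ (η-2) * (l3^k) ^ (η-2) := by rw [← h2]; exact h1
          _ ≤ K * (l3^k) ^ (η-2) := by
              apply mul_le_mul_of_nonneg_right (le_max_left _ _)
                (Real.rpow_nonneg (by positivity) _)
    have hl3k : (l3^k : ℝ) ^ (η-2) = (l3 ^ (η-2))^k := by
      rw [← Real.rpow_natCast l3 k, ← Real.rpow_mul hl3pos.le, mul_comm,
        Real.rpow_mul hl3pos.le, Real.rpow_natCast]
    have hEk := hEb k
    have hFk := hFb k
    have hCE0 : 0 ≤ CE := by positivity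
    have hCF0 : 0 ≤ CF := by positivity
    calc S k ^ (η-2) * |E k| * |F k|
        ≤ (K * (l3^k) ^ (η-2)) * (CE * r^k) * (CF * r^k) := by
          apply mul_le_mul
          apply mul_le_mul hSb hEk (abs_nonneg _)
          · positivity
          · exact hFk
          · exact abs_nonneg _
          · positivity
      _ = (K*CE*CF) * ((l3 ^ (η-2))^k * (r^k * r^k)) := by rw [hl3k]; ring
      _ = (K*CE*CF) * ρ^k := by
          rw [hρdef, mul_pow]
          ring
  have hlower : ∀ᶠ k in atTop,
      (0:ℝ) ≤ S k ^ η * |α - M k / S k| * |α^2 - N k / S k| := by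
    apply Eventually.of_forall
    intro k
    have hSk1 : 1 ≤ S k := (hpos k).1
    have h0 : (0:ℝ) ≤ S k ^ η := Real.rpow_nonneg (by linarith) _
    positivity
  have hgeo : Tendsto (fun k : ℕ => (K*CE*CF) * ρ^k) atTop (𝓝 0) := by
    have h := tendsto_pow_atTop_nhds_zero_of_lt_one hρpos.le hρlt1
    simpa using h.const_mul (K*CE*CF)
  exact tendsto_of_tendsto_of_tendsto_of_le_of_le' tendsto_const_nhds hgeo hlower hupper
end
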